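/- arXiv:2502.19972 — 5 statements merged into one kernel-verified Lean document; each statement's English description precedes it below -/
import Mathlib

section
/- Let g ≥ 3 be an integer and ν_0, ν_2, ν_4 ∈ ℂ with ν_0 ≠ 0, together with ν_6, ν_8 ∈ ℂ. Let W : ℂ^g → ℂ be an entire function of the variables (v_{2g}, v_{2g−2}, …, v_2) and define 𝒫_{i_1,…,i_k} = ∂_{v_{i_1}}⋯∂_{v_{i_k}} W for indices in {2,4,…,2g}, with the convention that 𝒫 with any index outside {2,4,…,2g} is 0. Assume that identically on ℂ^g: 𝒫_{2,2,2,2} = 2𝒫_{2,2}(3𝒫_{2,2} + 2ν_4) + 2ν_2(ν_6 − 𝒫_{4,2} + 3𝒫_{2,4}) + 4ν_0(3𝒫_{2,6} − 3𝒫_{4,4} + 𝒫_{6,2} − 2ν_8). Fix μ ∈ ℂ with μ² = −3ν_0, constants c_1,…,c_{g−3} ∈ ℂ (no constants if g = 3), and set α = −16ν_0, β = 2μ, γ = ν_2/μ, δ = (2/3)ν_4 + ν_2²/(18ν_0). Then ψ(t_1,t_2,t_3) := −2·𝒫_{2,2}(c_1,…,c_{g−3}, αt_3, βt_2, t_1 +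 γt_2) − δ (the arguments substituted for (v_{2g}, v_{2g−2}, …, v_8, v_6, v_4, v_2) in that order) satisfies the KP-I equation ∂_{t_1}(∂_{t_3}ψ + 6ψ·∂_{t_1}ψ + ∂_{t_1}³ψ) = ∂_{t_2}²ψ identically on ℂ³. -/
/-- Partial derivative in the `j`-th coordinate direction. -/
noncomputable def pd {n : ℕ} (j : Fin n) (F : (Fin n → ℂ) → ℂ) : (Fin n → ℂ) → ℂ :=
  fun t => deriv (fun z => F (Function.update t j z)) (t j)

/-- `Φ(t₁,t₂,t₃)` satisfies the KP-I equation
`∂_{t₁}(∂_{t₃}Φ + 6Φ∂_{t₁}Φ + ∂_{t₁}³Φ) = ∂_{t₂}²Φ`. -/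
def IsKPI (Φ : (Fin 3 → ℂ) → ℂ) : Prop :=
  ∀ t, pd 0 (fun s => pd 2 Φ s + 6 * Φ s * pd 0 Φ s + pd 0 (pd 0 (pd 0 Φ)) s) t
      = pd 1 (pd 1 Φ) t

/-- `Φ(t₁,t₂,t₃)` satisfies the KP-II equation
`∂_{t₁}(∂_{t₃}Φ + 6Φ∂_{t₁}Φ + ∂_{t₁}³Φ) = -∂_{t₂}²Φ`. -/
def IsKPII (Φ : (Fin 3 → ℂ) → ℂ) : Prop :=
  ∀ t, pd 0 (fun s => pd 2 Φ s + 6 * Φ s * pd 0 Φ s + pd 0 (pd 0 (pd 0 Φ)) s) t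
      = -(pd 1 (pd 1 Φ) t)

namespace Stmt14Aux

noncomputable def Dd {n : ℕ} (w : Fin n → ℂ) (F : (Fin n → ℂ) → ℂ) : (Fin n → ℂ) → ℂ :=
  fun v => fderiv ℂ F v w

variable {n : ℕ}

lemma Dd_analytic {F : (Fin n → ℂ) → ℂ} (hF : AnalyticOnNhd ℂ F Set.univ) (w : Fin n → ℂ) :
    AnalyticOnNhd ℂ (Dd w F) Set.univ := by
  have h1 : AnalyticOnNhd ℂ (fderiv ℂ F) Set.univ := hF.fderiv
  exact ((ContinuousLinearMap.apply ℂ ℂ w).analyticOnNhd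
      (Set.univ : Set ((Fin n → ℂ) →L[ℂ] ℂ))).comp h1 (Set.mapsTo_univ _ _)

lemma an_diff {E : Type*} [NormedAddCommGroup E] [NormedSpace ℂ E]
    {F : (Fin n → ℂ) → E} (hF : AnalyticOnNhd ℂ F Set.univ) :
    Differentiable ℂ F := fun x => (hF x (Set.mem_univ x)).differentiableAt

lemma slice {F : (Fin n → ℂ) → ℂ} (hF : Differentiable ℂ F) (p w : Fin n → ℂ) (z : ℂ) :
    HasDerivAt (fun s : ℂ => F (p + s • w)) (Dd w F (p + z • w)) z := by
  have h1 : HasDerivAt (fun s : ℂ => p + s • w) w z := by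
    simpa using ((hasDerivAt_id z).smul_const w).const_add p
  have := (hF (p + z • w)).hasFDerivAt.comp_hasDerivAt z h1
  exact this

lemma pd_eq_Dd (F : (Fin n → ℂ) → ℂ) (hF : Differentiable ℂ F) (j : Fin n) :
    pd j F = Dd (Pi.single j 1) F := by
  funext t
  have hupd : ∀ z : ℂ, Function.update t j z
      = Function.update t j 0 + z • (Pi.single j 1 : Fin n → ℂ) := by
    intro z; funext k
    by_cases h : k = j
    · subst h; simp
    · simp [Function.update_apply, h, Pi.single_apply]
  have h := slice hF (Function.update t j 0) (Pi.single j 1) (t j)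
  rw [← hupd (t j), Function.update_eq_self] at h
  show deriv (fun z => F (Function.update t j z)) (t j) = _
  rw [show (fun z => F (Function.update t j z))
      = (fun z : ℂ => F (Function.update t j 0 + z • (Pi.single j 1 : Fin n → ℂ))) from
    funext fun z => by rw [hupd]]
  exact h.deriv

lemma Dd_comm {F : (Fin n → ℂ) → ℂ} (hF : AnalyticOnNhd ℂ F Set.univ) (x y : Fin n → ℂ) :
    Dd x (Dd y F) = Dd y (Dd x F) := by
  have hΦ : AnalyticOnNhd ℂ (fderiv ℂ F) Set.univ := hF.fderiv
  have hΦd : Differentiable ℂ (fderiv ℂ F) := an_diff hΦ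
  have key : ∀ (x y : Fin n → ℂ) (v : Fin n → ℂ),
      Dd x (Dd y F) v = fderiv ℂ (fderiv ℂ F) v x y := by
    intro x y v
    have hA : HasFDerivAt (fun u => (ContinuousLinearMap.apply ℂ ℂ y) (fderiv ℂ F u))
        ((ContinuousLinearMap.apply ℂ ℂ y).comp (fderiv ℂ (fderiv ℂ F) v)) v :=
      ((ContinuousLinearMap.apply ℂ ℂ y).hasFDerivAt).comp v (hΦd v).hasFDerivAt
    show fderiv ℂ (fun u => fderiv ℂ F u y) v x = _
    rw [show (fun u => fderiv ℂ F u y)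
        = (fun u => (ContinuousLinearMap.apply ℂ ℂ y) (fderiv ℂ F u)) from rfl, hA.fderiv]
    rfl
  funext v
  rw [key, key]
  exact second_derivative_symmetric (fun u => ((hF u trivial).differentiableAt).hasFDerivAt)
    (hΦd v).hasFDerivAt x y

lemma Dd_dir_add (x y : Fin n → ℂ) (F : (Fin n → ℂ) → ℂ) (v : Fin n → ℂ) :
    Dd (x + y) F v = Dd x F v + Dd y F v := by simp [Dd]

lemma Dd_dir_smul (s : ℂ) (x : Fin n → ℂ) (F : (Fin n → ℂ) → ℂ) (v : Fin n → ℂ) :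
    Dd (s • x) F v = s * Dd x F v := by simp [Dd]

variable {f g : (Fin n → ℂ) → ℂ} {v w : Fin n → ℂ}

lemma Dd_add (hf : DifferentiableAt ℂ f v) (hg : DifferentiableAt ℂ g v) :
    Dd w (fun x => f x + g x) v = Dd w f v + Dd w g v := by
  simp [Dd, fderiv_fun_add hf hg]

lemma Dd_sub (hf : DifferentiableAt ℂ f v) (hg : DifferentiableAt ℂ g v) :
    Dd w (fun x => f x - g x) v = Dd w f v - Dd w g v := by
  simp [Dd, fderiv_fun_sub hf hg]

lemma Dd_mul (hf : DifferentiableAt ℂ f v) (hg : DifferentiableAt ℂ g v) :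
    Dd w (fun x => f x * g x) v = Dd w f v * g v + f v * Dd w g v := by
  simp only [Dd, fderiv_fun_mul hf hg]
  simp [smul_eq_mul]
  ring

lemma Dd_const_mul (c : ℂ) (hf : DifferentiableAt ℂ f v) :
    Dd w (fun x => c * f x) v = c * Dd w f v := by
  simp [Dd, fderiv_const_mul hf c]

lemma Dd_add_const (c : ℂ) :
    Dd w (fun x => f x + c) v = Dd w f v := by
  simp [Dd, fderiv_add_const]

set_option maxHeartbeats 1000000 in
theorem aux (W : (Fin n → ℂ) → ℂ) (hW : AnalyticOnNhd ℂ W Set.univ)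
    (a b e C : Fin n → ℂ) (ν0 ν2 ν4 K : ℂ) (hν0 : ν0 ≠ 0) (μ : ℂ) (hμ : μ ^ 2 = -3 * ν0)
    (hrel : ∀ v, Dd a (Dd a (Dd a (Dd a W))) v
      = 6 * (Dd a (Dd a W) v * Dd a (Dd a W) v) + 4 * ν4 * Dd a (Dd a W) v
        + 4 * ν2 * Dd a (Dd b W) v + 16 * ν0 * Dd a (Dd e W) v
        - 12 * ν0 * Dd b (Dd b W) v + K) :
    IsKPI (fun t => -2 * Dd a (Dd a W)
        (C + (t 0 + ν2 / μ * t 1) • a + (2 * μ * t 1) • b + ((-16 * ν0) * t 2) • e)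
      - (2 / 3 * ν4 + ν2 ^ 2 / (18 * ν0))) := by
  have hμ0 : μ ≠ 0 := by
    intro h
    apply hν0
    have h2 : (0 : ℂ) = -3 * ν0 := by simpa [h] using hμ
    linear_combination h2 / 3
  -- differentiability facts
  have dW := an_diff hW
  have hA1 := Dd_analytic hW a
  have hA2 := Dd_analytic hA1 a
  have hA3 := Dd_analytic hA2 a
  have hA4 := Dd_analytic hA3 a
  have hA5 := Dd_analytic hA4 a
  have dA1 := an_diff hA1; have dA2 := an_diff hA2; have dA3 := an_diff hA3
  have dA4 := an_diff hA4; have dA5 := an_diff hA5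
  have hB1 := Dd_analytic hW b
  have hP2 := Dd_analytic hB1 a
  have hP3 := Dd_analytic hP2 a
  have dP2 := an_diff hP2; have dP3 := an_diff hP3
  have hE1 := Dd_analytic hW e
  have hR2 := Dd_analytic hE1 a
  have hR3 := Dd_analytic hR2 a
  have dR2 := an_diff hR2; have dR3 := an_diff hR3
  have hS1 := Dd_analytic hW b
  have hS2 := Dd_analytic hS1 b
  have hS3 := Dd_analytic hS2 a
  have dS2 := an_diff hS2; have dS3 := an_diff hS3
  have hbA2 := Dd_analytic hA2 b
  have dbA2 := an_diff hbA2
  have heA2 := Dd_analytic hA2 e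
  have deA2 := an_diff heA2
  set w1 : Fin n → ℂ := (ν2 / μ) • a + (2 * μ) • b with hw1def
  set w2 : Fin n → ℂ := (-16 * ν0) • e with hw2def
  have hw2A2 := Dd_analytic hA2 w2
  have dw2A2 := an_diff hw2A2
  have hw1A2 := Dd_analytic hA2 w1
  have dw1A2 := an_diff hw1A2
  set L : (Fin 3 → ℂ) → (Fin n → ℂ) :=
    fun t => C + (t 0 + ν2 / μ * t 1) • a + (2 * μ * t 1) • b + ((-16 * ν0) * t 2) • e
    with hLdef
  have h10 : (1 : Fin 3) ≠ 0 := by decide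
  have h20 : (2 : Fin 3) ≠ 0 := by decide
  have h01 : (0 : Fin 3) ≠ 1 := by decide
  have h21 : (2 : Fin 3) ≠ 1 := by decide
  have h02 : (0 : Fin 3) ≠ 2 := by decide
  have h12 : (1 : Fin 3) ≠ 2 := by decide
  have hL0 : ∀ (t : Fin 3 → ℂ) (z : ℂ),
      L (Function.update t 0 z) = L t + (z - t 0) • a := by
    intro t z; funext k
    simp only [hLdef, Function.update_self, Function.update_of_ne h10,
      Function.update_of_ne h20, Pi.add_apply, Pi.smul_apply, smul_eq_mul]
    ring
  have hL1 : ∀ (t : Fin 3 → ℂ) (z : ℂ),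
      L (Function.update t 1 z) = L t + (z - t 1) • w1 := by
    intro t z; funext k
    simp only [hLdef, hw1def, Function.update_self, Function.update_of_ne h01,
      Function.update_of_ne h21, Pi.add_apply, Pi.smul_apply, smul_eq_mul]
    ring
  have hL2 : ∀ (t : Fin 3 → ℂ) (z : ℂ),
      L (Function.update t 2 z) = L t + (z - t 2) • w2 := by
    intro t z; funext k
    simp only [hLdef, hw2def, Function.update_self, Function.update_of_ne h02,
      Function.update_of_ne h12, Pi.add_apply, Pi.smul_apply, smul_eq_mul]
    ring
  have key : ∀ (i : Fin 3) (w : Fin n → ℂ),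
      (∀ t z, L (Function.update t i z) = L t + (z - t i) • w) →
      ∀ (F : (Fin n → ℂ) → ℂ), Differentiable ℂ F → ∀ (t : Fin 3 → ℂ),
      HasDerivAt (fun z => F (L (Function.update t i z))) (Dd w F (L t)) (t i) := by
    intro i w hLw F hF t
    have h0 : ∀ z : ℂ, L (Function.update t i z) = (L t - t i • w) + z • w := by
      intro z; rw [hLw t z]; funext k
      simp only [Pi.add_apply, Pi.sub_apply, Pi.smul_apply, smul_eq_mul]
      ring
    rw [show (fun z => F (L (Function.update t i z)))
        = fun z : ℂ => F ((L t - t i • w) + z • w) from funext fun z => by rw [h0]]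
    have h := slice hF (L t - t i • w) w (t i)
    have h2 : (L t - t i • w) + (t i) • w = L t := by
      funext k; simp
    rwa [h2] at h
  show IsKPI (fun t => -2 * Dd a (Dd a W) (L t) - (2 / 3 * ν4 + ν2 ^ 2 / (18 * ν0)))
  set Ψ : (Fin 3 → ℂ) → ℂ :=
    fun t => -2 * Dd a (Dd a W) (L t) - (2 / 3 * ν4 + ν2 ^ 2 / (18 * ν0)) with hΨ
  -- first partials of Ψ as functions
  have hps0 : pd 0 Ψ = fun s => -2 * Dd a (Dd a (Dd a W)) (L s) := by
    funext t
    show deriv (fun z => -2 * Dd a (Dd a W) (L (Function.update t 0 z))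
      - (2 / 3 * ν4 + ν2 ^ 2 / (18 * ν0))) (t 0) = -2 * Dd a (Dd a (Dd a W)) (L t)
    exact (((key 0 a hL0 (Dd a (Dd a W)) dA2 t).const_mul (-2)).sub_const
      (2 / 3 * ν4 + ν2 ^ 2 / (18 * ν0))).deriv
  have hps00 : pd 0 (pd 0 Ψ) = fun s => -2 * Dd a (Dd a (Dd a (Dd a W))) (L s) := by
    rw [hps0]; funext t
    show deriv (fun z => -2 * Dd a (Dd a (Dd a W)) (L (Function.update t 0 z))) (t 0) = _
    exact ((key 0 a hL0 (Dd a (Dd a (Dd a W))) dA3 t).const_mul (-2)).deriv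
  have hps000 : pd 0 (pd 0 (pd 0 Ψ))
      = fun s => -2 * Dd a (Dd a (Dd a (Dd a (Dd a W)))) (L s) := by
    rw [hps00]; funext t
    show deriv (fun z => -2 * Dd a (Dd a (Dd a (Dd a W))) (L (Function.update t 0 z))) (t 0) = _
    exact ((key 0 a hL0 (Dd a (Dd a (Dd a (Dd a W)))) dA4 t).const_mul (-2)).deriv
  have hps2 : pd 2 Ψ = fun s => -2 * Dd w2 (Dd a (Dd a W)) (L s) := by
    funext t
    show deriv (fun z => -2 * Dd a (Dd a W) (L (Function.update t 2 z))
      - (2 / 3 * ν4 + ν2 ^ 2 / (18 * ν0))) (t 2) = _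
    exact (((key 2 w2 hL2 (Dd a (Dd a W)) dA2 t).const_mul (-2)).sub_const
      (2 / 3 * ν4 + ν2 ^ 2 / (18 * ν0))).deriv
  have hps1 : pd 1 Ψ = fun s => -2 * Dd w1 (Dd a (Dd a W)) (L s) := by
    funext t
    show deriv (fun z => -2 * Dd a (Dd a W) (L (Function.update t 1 z))
      - (2 / 3 * ν4 + ν2 ^ 2 / (18 * ν0))) (t 1) = _
    exact (((key 1 w1 hL1 (Dd a (Dd a W)) dA2 t).const_mul (-2)).sub_const
      (2 / 3 * ν4 + ν2 ^ 2 / (18 * ν0))).deriv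
  have hps11 : pd 1 (pd 1 Ψ) = fun s => -2 * Dd w1 (Dd w1 (Dd a (Dd a W))) (L s) := by
    rw [hps1]; funext t
    show deriv (fun z => -2 * Dd w1 (Dd a (Dd a W)) (L (Function.update t 1 z))) (t 1) = _
    exact ((key 1 w1 hL1 (Dd w1 (Dd a (Dd a W))) dw1A2 t).const_mul (-2)).deriv
  -- commutation normal forms
  have n1 : Dd b (Dd a (Dd a W)) = Dd a (Dd a (Dd b W)) :=
    (Dd_comm hA1 b a).trans (congrArg (Dd a) (Dd_comm hW b a))
  have n2 : Dd e (Dd a (Dd a W)) = Dd a (Dd a (Dd e W)) :=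
    (Dd_comm hA1 e a).trans (congrArg (Dd a) (Dd_comm hW e a))
  have n3 : Dd b (Dd b (Dd a (Dd a W))) = Dd a (Dd a (Dd b (Dd b W))) := by
    rw [n1]
    exact (Dd_comm hP2 b a).trans (congrArg (Dd a) (Dd_comm hB1 b a))
  -- the relation, function form
  have hrelf : Dd a (Dd a (Dd a (Dd a W)))
      = fun v => 6 * (Dd a (Dd a W) v * Dd a (Dd a W) v) + 4 * ν4 * Dd a (Dd a W) v
        + 4 * ν2 * Dd a (Dd b W) v + 16 * ν0 * Dd a (Dd e W) v
        - 12 * ν0 * Dd b (Dd b W) v + K := funext hrel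
  -- fifth derivative
  have h5f : Dd a (Dd a (Dd a (Dd a (Dd a W))))
      = fun v => 6 * (Dd a (Dd a (Dd a W)) v * Dd a (Dd a W) v
          + Dd a (Dd a W) v * Dd a (Dd a (Dd a W)) v)
        + 4 * ν4 * Dd a (Dd a (Dd a W)) v
        + 4 * ν2 * Dd a (Dd a (Dd b W)) v + 16 * ν0 * Dd a (Dd a (Dd e W)) v
        - 12 * ν0 * Dd a (Dd b (Dd b W)) v := by
    rw [show Dd a (Dd a (Dd a (Dd a (Dd a W)))) = Dd a (fun v =>
        6 * (Dd a (Dd a W) v * Dd a (Dd a W) v) + 4 * ν4 * Dd a (Dd a W) v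
        + 4 * ν2 * Dd a (Dd b W) v + 16 * ν0 * Dd a (Dd e W) v
        - 12 * ν0 * Dd b (Dd b W) v + K) from congrArg (Dd a) hrelf]
    funext v
    rw [Dd_add_const]
    rw [Dd_sub ((((dA2.fun_mul dA2).const_mul 6).fun_add (dA2.const_mul (4 * ν4))).fun_add
        (dP2.const_mul (4 * ν2)) |>.fun_add (dR2.const_mul (16 * ν0)) |>.differentiableAt)
      ((dS2.const_mul (12 * ν0)).differentiableAt)]
    rw [Dd_add ((((dA2.fun_mul dA2).const_mul 6).fun_add (dA2.const_mul (4 * ν4))).fun_add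
        (dP2.const_mul (4 * ν2)) |>.differentiableAt)
      ((dR2.const_mul (16 * ν0)).differentiableAt)]
    rw [Dd_add (((dA2.fun_mul dA2).const_mul 6).fun_add (dA2.const_mul (4 * ν4)) |>.differentiableAt)
      ((dP2.const_mul (4 * ν2)).differentiableAt)]
    rw [Dd_add (((dA2.fun_mul dA2).const_mul 6).differentiableAt)
      ((dA2.const_mul (4 * ν4)).differentiableAt)]
    rw [Dd_const_mul 6 ((dA2.fun_mul dA2).differentiableAt)]
    rw [Dd_mul (dA2.differentiableAt) (dA2.differentiableAt)]
    rw [Dd_const_mul (4 * ν4) (dA2.differentiableAt)]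
    rw [Dd_const_mul (4 * ν2) (dP2.differentiableAt)]
    rw [Dd_const_mul (16 * ν0) (dR2.differentiableAt)]
    rw [Dd_const_mul (12 * ν0) (dS2.differentiableAt)]
  -- sixth derivative, pointwise
  have h6 : ∀ v, Dd a (Dd a (Dd a (Dd a (Dd a (Dd a W))))) v
      = 6 * ((Dd a (Dd a (Dd a (Dd a W))) v * Dd a (Dd a W) v
            + Dd a (Dd a (Dd a W)) v * Dd a (Dd a (Dd a W)) v)
          + (Dd a (Dd a (Dd a W)) v * Dd a (Dd a (Dd a W)) v
            + Dd a (Dd a W) v * Dd a (Dd a (Dd a (Dd a W))) v))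
        + 4 * ν4 * Dd a (Dd a (Dd a (Dd a W))) v
        + 4 * ν2 * Dd a (Dd a (Dd a (Dd b W))) v
        + 16 * ν0 * Dd a (Dd a (Dd a (Dd e W))) v
        - 12 * ν0 * Dd a (Dd a (Dd b (Dd b W))) v := by
    intro v
    rw [show Dd a (Dd a (Dd a (Dd a (Dd a (Dd a W))))) = Dd a (fun v =>
        6 * (Dd a (Dd a (Dd a W)) v * Dd a (Dd a W) v
          + Dd a (Dd a W) v * Dd a (Dd a (Dd a W)) v)
        + 4 * ν4 * Dd a (Dd a (Dd a W)) v
        + 4 * ν2 * Dd a (Dd a (Dd b W)) v + 16 * ν0 * Dd a (Dd a (Dd e W)) v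
        - 12 * ν0 * Dd a (Dd b (Dd b W)) v) from congrArg (Dd a) h5f]
    rw [Dd_sub (((((dA3.fun_mul dA2).fun_add (dA2.fun_mul dA3)).const_mul 6).fun_add
        (dA3.const_mul (4 * ν4))).fun_add (dP3.const_mul (4 * ν2))
        |>.fun_add (dR3.const_mul (16 * ν0)) |>.differentiableAt)
      ((dS3.const_mul (12 * ν0)).differentiableAt)]
    rw [Dd_add ((((((dA3.fun_mul dA2).fun_add (dA2.fun_mul dA3)).const_mul 6).fun_add
        (dA3.const_mul (4 * ν4))).fun_add (dP3.const_mul (4 * ν2))).differentiableAt)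
      ((dR3.const_mul (16 * ν0)).differentiableAt)]
    rw [Dd_add (((((dA3.fun_mul dA2).fun_add (dA2.fun_mul dA3)).const_mul 6).fun_add
        (dA3.const_mul (4 * ν4))).differentiableAt)
      ((dP3.const_mul (4 * ν2)).differentiableAt)]
    rw [Dd_add ((((dA3.fun_mul dA2).fun_add (dA2.fun_mul dA3)).const_mul 6).differentiableAt)
      ((dA3.const_mul (4 * ν4)).differentiableAt)]
    rw [Dd_const_mul 6 (((dA3.fun_mul dA2).fun_add (dA2.fun_mul dA3)).differentiableAt)]
    rw [Dd_add ((dA3.fun_mul dA2).differentiableAt) ((dA2.fun_mul dA3).differentiableAt)]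
    rw [Dd_mul (dA3.differentiableAt) (dA2.differentiableAt)]
    rw [Dd_mul (dA2.differentiableAt) (dA3.differentiableAt)]
    rw [Dd_const_mul (4 * ν4) (dA3.differentiableAt)]
    rw [Dd_const_mul (4 * ν2) (dP3.differentiableAt)]
    rw [Dd_const_mul (16 * ν0) (dR3.differentiableAt)]
    rw [Dd_const_mul (12 * ν0) (dS3.differentiableAt)]
  -- w2 direction
  have hw2f : Dd w2 (Dd a (Dd a W)) = fun v => (-16 * ν0) * Dd e (Dd a (Dd a W)) v := by
    funext v; rw [hw2def, Dd_dir_smul]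
  -- w1 expansion of second derivative, pointwise
  have hw1f : Dd w1 (Dd a (Dd a W))
      = fun v => ν2 / μ * Dd a (Dd a (Dd a W)) v + 2 * μ * Dd b (Dd a (Dd a W)) v := by
    funext v; rw [hw1def, Dd_dir_add, Dd_dir_smul, Dd_dir_smul]
  have hw1w1 : ∀ v, Dd w1 (Dd w1 (Dd a (Dd a W))) v
      = ν2 / μ * (ν2 / μ * Dd a (Dd a (Dd a (Dd a W))) v
          + 2 * μ * Dd b (Dd a (Dd a (Dd a W))) v)
        + 2 * μ * (ν2 / μ * Dd a (Dd b (Dd a (Dd a W))) v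
          + 2 * μ * Dd b (Dd b (Dd a (Dd a W))) v) := by
    intro v
    rw [show Dd w1 (Dd w1 (Dd a (Dd a W))) = Dd w1 (fun v =>
        ν2 / μ * Dd a (Dd a (Dd a W)) v + 2 * μ * Dd b (Dd a (Dd a W)) v) from
      congrArg (Dd w1) hw1f]
    rw [Dd_add ((dA3.const_mul (ν2 / μ)).differentiableAt)
      ((dbA2.const_mul (2 * μ)).differentiableAt)]
    rw [Dd_const_mul (ν2 / μ) (dA3.differentiableAt)]
    rw [Dd_const_mul (2 * μ) (dbA2.differentiableAt)]
    rw [hw1def]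
    rw [Dd_dir_add, Dd_dir_smul, Dd_dir_smul, Dd_dir_add, Dd_dir_smul, Dd_dir_smul]
  -- main computation
  intro t
  rw [hps11]
  rw [show (fun s => pd 2 Ψ s + 6 * Ψ s * pd 0 Ψ s + pd 0 (pd 0 (pd 0 Ψ)) s)
      = (fun s => -2 * Dd w2 (Dd a (Dd a W)) (L s)
        + 6 * Ψ s * (-2 * Dd a (Dd a (Dd a W)) (L s))
        + -2 * Dd a (Dd a (Dd a (Dd a (Dd a W)))) (L s)) from
    funext fun s => by rw [hps000, hps2, hps0]]
  show deriv (fun z =>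
      -2 * Dd w2 (Dd a (Dd a W)) (L (Function.update t 0 z))
      + 6 * (-2 * Dd a (Dd a W) (L (Function.update t 0 z))
          - (2 / 3 * ν4 + ν2 ^ 2 / (18 * ν0)))
        * (-2 * Dd a (Dd a (Dd a W)) (L (Function.update t 0 z)))
      + -2 * Dd a (Dd a (Dd a (Dd a (Dd a W)))) (L (Function.update t 0 z))) (t 0)
    = -2 * Dd w1 (Dd w1 (Dd a (Dd a W))) (L t)
  have H := (((key 0 a hL0 (Dd w2 (Dd a (Dd a W))) dw2A2 t).const_mul (-2)).fun_add
      (((((key 0 a hL0 (Dd a (Dd a W)) dA2 t).const_mul (-2)).sub_const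
          (2 / 3 * ν4 + ν2 ^ 2 / (18 * ν0))).const_mul 6).fun_mul
        ((key 0 a hL0 (Dd a (Dd a (Dd a W))) dA3 t).const_mul (-2)))).fun_add
    ((key 0 a hL0 (Dd a (Dd a (Dd a (Dd a (Dd a W))))) dA5 t).const_mul (-2))
  rw [H.deriv]
  rw [Function.update_eq_self 0 t]
  -- now a pointwise identity at v := L t
  rw [hw1w1 (L t)]
  -- normalize mixed derivatives
  have m1 : ∀ v, Dd a (Dd w2 (Dd a (Dd a W))) v = (-16 * ν0) * Dd a (Dd a (Dd a (Dd e W))) v := by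
    intro v
    rw [show Dd w2 (Dd a (Dd a W)) = fun v => (-16 * ν0) * Dd e (Dd a (Dd a W)) v from hw2f]
    rw [Dd_const_mul (-16 * ν0) (deA2.differentiableAt)]
    rw [show Dd e (Dd a (Dd a W)) = Dd a (Dd a (Dd e W)) from n2]
  have m2 : ∀ v : Fin n → ℂ, Dd b (Dd a (Dd a (Dd a W))) v = Dd a (Dd a (Dd a (Dd b W))) v := by
    intro v
    rw [show Dd b (Dd a (Dd a (Dd a W))) = Dd a (Dd b (Dd a (Dd a W))) from Dd_comm hA2 b a,
      show Dd b (Dd a (Dd a W)) = Dd a (Dd a (Dd b W)) from n1]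
  have m3 : ∀ v : Fin n → ℂ, Dd a (Dd b (Dd a (Dd a W))) v = Dd a (Dd a (Dd a (Dd b W))) v := by
    intro v
    rw [show Dd b (Dd a (Dd a W)) = Dd a (Dd a (Dd b W)) from n1]
  have m4 : ∀ v : Fin n → ℂ, Dd b (Dd b (Dd a (Dd a W))) v = Dd a (Dd a (Dd b (Dd b W))) v := by
    intro v
    rw [show Dd b (Dd b (Dd a (Dd a W))) = Dd a (Dd a (Dd b (Dd b W))) from n3]
  rw [m1 (L t), m2 (L t), m3 (L t), m4 (L t), h6 (L t)]
  have hν0' : ν0 = -(μ ^ 2) / 3 := by linear_combination hμ / 3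
  rw [hν0']
  field_simp
  ring_nf
end Stmt14Aux

/-- for an entire `W : ℂ^g → ℂ` (`g ≥ 3`, coordinates `v_{2g},…,v₂`)
whose `𝒫`-derivatives satisfy the fourth-order relation for `𝒫_{2·4}`, with `ν₀ ≠ 0`
and `μ² = -3ν₀`, the function
`ψ(t₁,t₂,t₃) = -2𝒫_{2,2}(c₁,…,c_{g-3}, αt₃, βt₂, t₁+γt₂) - δ` solves KP-I. -/
theorem stmt_14 (g : ℕ) (hg : 3 ≤ g)
    (ν0 ν2 ν4 : ℂ) (hν0 : ν0 ≠ 0) (ν6 ν8 : ℂ)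
    (W : (Fin g → ℂ) → ℂ) (hW : AnalyticOnNhd ℂ W Set.univ)
    (P22 P24 P42 P26 P62 P44 P2222 : (Fin g → ℂ) → ℂ)
    (hP22 : P22 = fun v => pd ⟨g-1, by omega⟩ (pd ⟨g-1, by omega⟩ W) v)
    (hP24 : P24 = fun v => pd ⟨g-1, by omega⟩ (pd ⟨g-2, by omega⟩ W) v)
    (hP42 : P42 = fun v => pd ⟨g-2, by omega⟩ (pd ⟨g-1, by omega⟩ W) v)
    (hP26 : P26 = fun v => pd ⟨g-1, by omega⟩ (pd ⟨g-3, by omega⟩ W) v)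
    (hP62 : P62 = fun v => pd ⟨g-3, by omega⟩ (pd ⟨g-1, by omega⟩ W) v)
    (hP44 : P44 = fun v => pd ⟨g-2, by omega⟩ (pd ⟨g-2, by omega⟩ W) v)
    (hP2222 : P2222 = fun v =>
      pd ⟨g-1, by omega⟩ (pd ⟨g-1, by omega⟩ (pd ⟨g-1, by omega⟩ (pd ⟨g-1, by omega⟩ W))) v)
    (hrel : ∀ v, P2222 v = 2 * P22 v * (3 * P22 v + 2 * ν4)
      + 2 * ν2 * (ν6 - P42 v + 3 * P24 v)
      + 4 * ν0 * (3 * P26 v - 3 * P44 v + P62 v - 2 * ν8))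
    (μ : ℂ) (hμ : μ^2 = -3 * ν0) (c : ℕ → ℂ) :
    IsKPI (fun t => -2 * P22 (fun k =>
      if (k:ℕ) = g-1 then t 0 + (ν2 / μ) * t 1
      else if (k:ℕ) = g-2 then (2*μ) * t 1
      else if (k:ℕ) = g-3 then (-16 * ν0) * t 2
      else c ((k:ℕ)+1))
      - ((2/3) * ν4 + ν2^2 / (18 * ν0))) := by
  have hg1 : g - 1 < g := by omega
  have hg2 : g - 2 < g := by omega
  have hg3 : g - 3 < g := by omega
  have hd12 : ¬(g - 1 = g - 2) := by omega
  have hd13 : ¬(g - 1 = g - 3) := by omega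
  have hd23 : ¬(g - 2 = g - 3) := by omega
  have hd21 : ¬(g - 2 = g - 1) := by omega
  have hd31 : ¬(g - 3 = g - 1) := by omega
  have hd32 : ¬(g - 3 = g - 2) := by omega
  have dW := Stmt14Aux.an_diff hW
  have hA1 := Stmt14Aux.Dd_analytic hW (Pi.single ⟨g-1,hg1⟩ 1)
  have hA2 := Stmt14Aux.Dd_analytic hA1 (Pi.single ⟨g-1,hg1⟩ 1)
  have hA3 := Stmt14Aux.Dd_analytic hA2 (Pi.single ⟨g-1,hg1⟩ 1)
  have hB1 := Stmt14Aux.Dd_analytic hW (Pi.single ⟨g-2,hg2⟩ 1)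
  have hE1 := Stmt14Aux.Dd_analytic hW (Pi.single ⟨g-3,hg3⟩ 1)
  have hP22' : P22 = Stmt14Aux.Dd (Pi.single ⟨g-1,hg1⟩ 1) (Stmt14Aux.Dd (Pi.single ⟨g-1,hg1⟩ 1) W) := by
    have h0 : P22 = pd ⟨g-1,hg1⟩ (pd ⟨g-1,hg1⟩ W) := hP22
    rw [h0, Stmt14Aux.pd_eq_Dd W dW, Stmt14Aux.pd_eq_Dd _ (Stmt14Aux.an_diff hA1)]
  have hP24' : P24 = Stmt14Aux.Dd (Pi.single ⟨g-1,hg1⟩ 1) (Stmt14Aux.Dd (Pi.single ⟨g-2,hg2⟩ 1) W) := by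
    have h0 : P24 = pd ⟨g-1,hg1⟩ (pd ⟨g-2,hg2⟩ W) := hP24
    rw [h0, Stmt14Aux.pd_eq_Dd W dW, Stmt14Aux.pd_eq_Dd _ (Stmt14Aux.an_diff hB1)]
  have hP42' : P42 = Stmt14Aux.Dd (Pi.single ⟨g-2,hg2⟩ 1) (Stmt14Aux.Dd (Pi.single ⟨g-1,hg1⟩ 1) W) := by
    have h0 : P42 = pd ⟨g-2,hg2⟩ (pd ⟨g-1,hg1⟩ W) := hP42
    rw [h0, Stmt14Aux.pd_eq_Dd W dW, Stmt14Aux.pd_eq_Dd _ (Stmt14Aux.an_diff hA1)]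
  have hP26' : P26 = Stmt14Aux.Dd (Pi.single ⟨g-1,hg1⟩ 1) (Stmt14Aux.Dd (Pi.single ⟨g-3,hg3⟩ 1) W) := by
    have h0 : P26 = pd ⟨g-1,hg1⟩ (pd ⟨g-3,hg3⟩ W) := hP26
    rw [h0, Stmt14Aux.pd_eq_Dd W dW, Stmt14Aux.pd_eq_Dd _ (Stmt14Aux.an_diff hE1)]
  have hP62' : P62 = Stmt14Aux.Dd (Pi.single ⟨g-3,hg3⟩ 1) (Stmt14Aux.Dd (Pi.single ⟨g-1,hg1⟩ 1) W) := by
    have h0 : P62 = pd ⟨g-3,hg3⟩ (pd ⟨g-1,hg1⟩ W) := hP62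
    rw [h0, Stmt14Aux.pd_eq_Dd W dW, Stmt14Aux.pd_eq_Dd _ (Stmt14Aux.an_diff hA1)]
  have hP44' : P44 = Stmt14Aux.Dd (Pi.single ⟨g-2,hg2⟩ 1) (Stmt14Aux.Dd (Pi.single ⟨g-2,hg2⟩ 1) W) := by
    have h0 : P44 = pd ⟨g-2,hg2⟩ (pd ⟨g-2,hg2⟩ W) := hP44
    rw [h0, Stmt14Aux.pd_eq_Dd W dW, Stmt14Aux.pd_eq_Dd _ (Stmt14Aux.an_diff hB1)]
  have hP2222' : P2222 = Stmt14Aux.Dd (Pi.single ⟨g-1,hg1⟩ 1) (Stmt14Aux.Dd (Pi.single ⟨g-1,hg1⟩ 1)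
      (Stmt14Aux.Dd (Pi.single ⟨g-1,hg1⟩ 1) (Stmt14Aux.Dd (Pi.single ⟨g-1,hg1⟩ 1) W))) := by
    have h0 : P2222 = pd ⟨g-1,hg1⟩ (pd ⟨g-1,hg1⟩ (pd ⟨g-1,hg1⟩ (pd ⟨g-1,hg1⟩ W))) := hP2222
    rw [h0, Stmt14Aux.pd_eq_Dd W dW, Stmt14Aux.pd_eq_Dd _ (Stmt14Aux.an_diff hA1), Stmt14Aux.pd_eq_Dd _ (Stmt14Aux.an_diff hA2),
      Stmt14Aux.pd_eq_Dd _ (Stmt14Aux.an_diff hA3)]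
  have hrel'' : ∀ v, Stmt14Aux.Dd (Pi.single ⟨g-1,hg1⟩ 1) (Stmt14Aux.Dd (Pi.single ⟨g-1,hg1⟩ 1)
      (Stmt14Aux.Dd (Pi.single ⟨g-1,hg1⟩ 1) (Stmt14Aux.Dd (Pi.single ⟨g-1,hg1⟩ 1) W))) v
      = 6 * (Stmt14Aux.Dd (Pi.single ⟨g-1,hg1⟩ 1) (Stmt14Aux.Dd (Pi.single ⟨g-1,hg1⟩ 1) W) v
          * Stmt14Aux.Dd (Pi.single ⟨g-1,hg1⟩ 1) (Stmt14Aux.Dd (Pi.single ⟨g-1,hg1⟩ 1) W) v)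
        + 4 * ν4 * Stmt14Aux.Dd (Pi.single ⟨g-1,hg1⟩ 1) (Stmt14Aux.Dd (Pi.single ⟨g-1,hg1⟩ 1) W) v
        + 4 * ν2 * Stmt14Aux.Dd (Pi.single ⟨g-1,hg1⟩ 1) (Stmt14Aux.Dd (Pi.single ⟨g-2,hg2⟩ 1) W) v
        + 16 * ν0 * Stmt14Aux.Dd (Pi.single ⟨g-1,hg1⟩ 1) (Stmt14Aux.Dd (Pi.single ⟨g-3,hg3⟩ 1) W) v
        - 12 * ν0 * Stmt14Aux.Dd (Pi.single ⟨g-2,hg2⟩ 1) (Stmt14Aux.Dd (Pi.single ⟨g-2,hg2⟩ 1) W) v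
        + (2 * ν2 * ν6 - 8 * ν0 * ν8) := by
    intro v
    have h := hrel v
    rw [hP2222', hP22', hP24', hP42', hP26', hP62', hP44'] at h
    rw [show Stmt14Aux.Dd (Pi.single ⟨g-2,hg2⟩ 1) (Stmt14Aux.Dd (Pi.single ⟨g-1,hg1⟩ 1) W)
        = Stmt14Aux.Dd (Pi.single ⟨g-1,hg1⟩ 1) (Stmt14Aux.Dd (Pi.single ⟨g-2,hg2⟩ 1) W) from Stmt14Aux.Dd_comm hW _ _,
      show Stmt14Aux.Dd (Pi.single ⟨g-3,hg3⟩ 1) (Stmt14Aux.Dd (Pi.single ⟨g-1,hg1⟩ 1) W)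
        = Stmt14Aux.Dd (Pi.single ⟨g-1,hg1⟩ 1) (Stmt14Aux.Dd (Pi.single ⟨g-3,hg3⟩ 1) W) from Stmt14Aux.Dd_comm hW _ _] at h
    rw [h]; ring
  rw [hP22']
  have main := Stmt14Aux.aux W hW (Pi.single ⟨g-1,hg1⟩ 1) (Pi.single ⟨g-2,hg2⟩ 1) (Pi.single ⟨g-3,hg3⟩ 1)
    (fun k : Fin g => if (k:ℕ) = g-1 then 0 else if (k:ℕ) = g-2 then 0
      else if (k:ℕ) = g-3 then 0 else c ((k:ℕ)+1))
    ν0 ν2 ν4 (2 * ν2 * ν6 - 8 * ν0 * ν8) hν0 μ hμ hrel''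
  have harg : ∀ t : Fin 3 → ℂ, (fun k : Fin g =>
      if (k:ℕ) = g-1 then t 0 + (ν2 / μ) * t 1
      else if (k:ℕ) = g-2 then (2*μ) * t 1
      else if (k:ℕ) = g-3 then (-16 * ν0) * t 2
      else c ((k:ℕ)+1))
      = (fun k : Fin g => if (k:ℕ) = g-1 then 0 else if (k:ℕ) = g-2 then 0
          else if (k:ℕ) = g-3 then 0 else c ((k:ℕ)+1))
        + (t 0 + ν2 / μ * t 1) • (Pi.single ⟨g-1,hg1⟩ 1 : Fin g → ℂ)
        + (2 * μ * t 1) • (Pi.single ⟨g-2,hg2⟩ 1 : Fin g → ℂ)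
        + ((-16 * ν0) * t 2) • (Pi.single ⟨g-3,hg3⟩ 1 : Fin g → ℂ) := by
    intro t; funext k
    simp only [Pi.add_apply, Pi.smul_apply, Pi.single_apply, smul_eq_mul]
    by_cases k1 : (k:ℕ) = g-1
    · simp [Fin.ext_iff, k1, hd12, hd13]
    · by_cases k2 : (k:ℕ) = g-2
      · simp [Fin.ext_iff, k1, k2, hd21, hd23]
      · by_cases k3 : (k:ℕ) = g-3
        · simp [Fin.ext_iff, k1, k2, k3, hd31, hd32]
        · simp [Fin.ext_iff, k1, k2, k3]
  rw [show (fun t : Fin 3 → ℂ => -2 * Stmt14Aux.Dd (Pi.single ⟨g-1,hg1⟩ 1) (Stmt14Aux.Dd (Pi.single ⟨g-1,hg1⟩ 1) W)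
        (fun k : Fin g =>
          if (k:ℕ) = g-1 then t 0 + (ν2 / μ) * t 1
          else if (k:ℕ) = g-2 then (2*μ) * t 1
          else if (k:ℕ) = g-3 then (-16 * ν0) * t 2
          else c ((k:ℕ)+1))
      - ((2/3) * ν4 + ν2^2 / (18 * ν0)))
    = (fun t : Fin 3 → ℂ => -2 * Stmt14Aux.Dd (Pi.single ⟨g-1,hg1⟩ 1) (Stmt14Aux.Dd (Pi.single ⟨g-1,hg1⟩ 1) W)
        ((fun k : Fin g => if (k:ℕ) = g-1 then 0 else if (k:ℕ) = g-2 then 0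
          else if (k:ℕ) = g-3 then 0 else c ((k:ℕ)+1))
        + (t 0 + ν2 / μ * t 1) • (Pi.single ⟨g-1,hg1⟩ 1 : Fin g → ℂ)
        + (2 * μ * t 1) • (Pi.single ⟨g-2,hg2⟩ 1 : Fin g → ℂ)
        + ((-16 * ν0) * t 2) • (Pi.single ⟨g-3,hg3⟩ 1 : Fin g → ℂ))
      - ((2/3) * ν4 + ν2^2 / (18 * ν0))) from funext fun t => by rw [harg t]]
  exact main
end

section
/- Let g ≥ 1 be an integer and ν_0, ν_2, …, ν_{4g+4} ∈ ℂ with ν_0 ≠ 0 and the convention ν_{−2} = 0, and let f(e_1,e_2) = Σ_{i=0}^{g+1} e_1^i e_2^i (2ν_{4g+4−4i} + ν_{4g+2−4i}(e_1+e_2)). Let W : ℂ^g → ℂ be an entire function of the variables (v_{2g}, v_{2g−2}, …, v_2), define 𝒫_{i_1,…,i_k} = ∂_{v_{i_1}}⋯∂_{v_{i_k}} W for indices in {2,4,…,2g}, with the convention that 𝒫 with any index outside {2,4,…,2g} is 0, and for v ∈ ℂ^g set E_v(e_1,e_2) = (e_1−e_2)·(f(e_1,e_2) − (e_1−e_2)²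 Σ_{i,j=1}^g 𝒫_{2g+2−2i,2g+2−2j}(v)·e_1^{i−1}e_2^{j−1}). Assume that for all v ∈ ℂ^g and all e_1,e_2,e_3,e_4 ∈ ℂ: (1/2)(e_2−e_1)(e_3−e_2)(e_3−e_1)(e_4−e_3)(e_4−e_2)(e_4−e_1)·Σ_{i,j,k,l=1}^g 𝒫_{2g+2−2i,2g+2−2j,2g+2−2k,2g+2−2l}(v)·e_1^{i−1}e_2^{j−1}e_3^{k−1}e_4^{l−1} = E_v(e_2,e_3)E_v(e_4,e_1) + E_v(e_3,e_1)E_v(e_4,e_2) + E_v(e_1,e_2)E_v(e_4,e_3). Then for every 1 ≤ k ≤ g, identically on ℂ^g: 𝒫_{2,2,2,2k} = 2𝒫_{2,2k}(3𝒫_{2,2} + 2ν_4) + 2ν_2(δ_{1,k}ν_6 − 𝒫_{4,2k} + 3𝒫_{2,2k+2}) + 4ν_0(3𝒫_{2,2k+4} − 3𝒫_{4,2k+2} + 𝒫_{6,2k} − 2δ_{1,k}ν_8 − δ_{2,k}ν_{10}). -/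
/-- Partial derivative `∂_{v_l}` with respect to the coordinate labeled `v_l`,
where the coordinates of `ℂ^g` are labeled `v_{2g}, v_{2g-2}, …, v₂`; it is the zero
operator when the label `l` is outside `{2,4,…,2g}`. -/
noncomputable def pde (g : ℕ) (l : ℕ) (F : (Fin g → ℂ) → ℂ) : (Fin g → ℂ) → ℂ :=
  if h : l % 2 = 0 ∧ 1 ≤ l ∧ l ≤ 2*g then pd ⟨g - l/2, by omega⟩ F else fun _ => 0

/-- `𝒫_{i,j} = ∂_{v_i}∂_{v_j} W` (zero when an index is outside `{2,4,…,2g}`). -/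
noncomputable def pe2 (g : ℕ) (W : (Fin g → ℂ) → ℂ) (i j : ℕ) : (Fin g → ℂ) → ℂ :=
  fun v => pde g i (pde g j W) v

/-- `𝒫_{i,j,k,l} = ∂_{v_i}∂_{v_j}∂_{v_k}∂_{v_l} W`. -/
noncomputable def pe4 (g : ℕ) (W : (Fin g → ℂ) → ℂ) (i j k l : ℕ) : (Fin g → ℂ) → ℂ :=
  fun v => pde g i (pde g j (pde g k (pde g l W))) v

/-- Kronecker delta. -/
noncomputable def kd (i j : ℕ) : ℂ := if i = j then 1 else 0

/-- `f(e₁,e₂) = Σ_{i=0}^{g+1} e₁^i e₂^i (2ν_{4g+4-4i} + ν_{4g+2-4i}(e₁+e₂))`. -/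
noncomputable def ffun (g : ℕ) (ν : ℤ → ℂ) (e1 e2 : ℂ) : ℂ :=
  ∑ i ∈ Finset.range (g+2),
    e1^i * e2^i * (2 * ν (4*(g:ℤ)+4-4*(i:ℤ)) + ν (4*(g:ℤ)+2-4*(i:ℤ)) * (e1+e2))

/-- `E_v(e₁,e₂) = (e₁-e₂)(f(e₁,e₂) - (e₁-e₂)² Σ_{i,j=1}^g 𝒫_{2g+2-2i,2g+2-2j}(v) e₁^{i-1}e₂^{j-1})`. -/
noncomputable def Efun (g : ℕ) (ν : ℤ → ℂ) (W : (Fin g → ℂ) → ℂ)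
    (v : Fin g → ℂ) (e1 e2 : ℂ) : ℂ :=
  (e1 - e2) * (ffun g ν e1 e2 - (e1 - e2)^2 *
    ∑ i : Fin g, ∑ j : Fin g,
      pe2 g W (2*g - 2*(i:ℕ)) (2*g - 2*(j:ℕ)) v * e1^(i:ℕ) * e2^(j:ℕ))

open Finset in
/-- `F` is a polynomial function with coefficients `a`, degree < n, and `a` vanishes from `n` on. -/
def BKPC (n : ℕ) (F : ℂ → ℂ) (a : ℕ → ℂ) : Prop :=
  (∀ x : ℂ, F x = ∑ i ∈ range n, a i * x ^ i) ∧ ∀ m, n ≤ m → a m = 0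

namespace BKPC
open Finset

lemma congr' {n F a} (h : BKPC n F a) {G : ℂ → ℂ} (hFG : ∀ x, G x = F x) : BKPC n G a :=
  ⟨fun x => (hFG x).trans (h.1 x), h.2⟩

lemma coeff_congr {n F a} (h : BKPC n F a) {b : ℕ → ℂ} (hab : ∀ i, b i = a i) :
    BKPC n F b := by
  refine ⟨fun x => ?_, fun m hm => by rw [hab m]; exact h.2 m hm⟩
  rw [h.1 x]; exact Finset.sum_congr rfl fun i _ => by rw [hab i]

lemma add {n F G a b} (hF : BKPC n F a) (hG : BKPC n G b) :
    BKPC n (fun x => F x + G x) (fun i => a i + b i) := by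
  refine ⟨fun x => ?_, fun m hm => by simp [hF.2 m hm, hG.2 m hm]⟩
  show F x + G x = _
  rw [hF.1 x, hG.1 x, ← Finset.sum_add_distrib]
  exact Finset.sum_congr rfl fun i _ => by ring

lemma sub {n F G a b} (hF : BKPC n F a) (hG : BKPC n G b) :
    BKPC n (fun x => F x - G x) (fun i => a i - b i) := by
  refine ⟨fun x => ?_, fun m hm => by simp [hF.2 m hm, hG.2 m hm]⟩
  show F x - G x = _
  rw [hF.1 x, hG.1 x, ← Finset.sum_sub_distrib]
  exact Finset.sum_congr rfl fun i _ => by ring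

lemma smul {n F a} (c : ℂ) (h : BKPC n F a) :
    BKPC n (fun x => c * F x) (fun i => c * a i) := by
  refine ⟨fun x => ?_, fun m hm => by simp [h.2 m hm]⟩
  show c * F x = _
  rw [h.1 x, Finset.mul_sum]
  exact Finset.sum_congr rfl fun i _ => by ring

lemma pad {n F a} (h : BKPC n F a) {m : ℕ} (hnm : n ≤ m) : BKPC m F a := by
  refine ⟨fun x => ?_, fun l hl => h.2 l (hnm.trans hl)⟩
  show F x = _
  rw [h.1 x]
  exact (Finset.sum_subset (f := fun i => a i * x ^ i) (Finset.range_subset_range.mpr hnm)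
    (fun i _ hni => by rw [h.2 i (by simpa using hni), zero_mul]))

lemma shift {n F a} (h : BKPC n F a) :
    BKPC (n+1) (fun x => x * F x) (fun i => if i = 0 then 0 else a (i-1)) := by
  refine ⟨fun x => ?_, fun m hm => ?_⟩
  · show x * F x = ∑ i ∈ Finset.range (n+1), (if i = 0 then 0 else a (i-1)) * x ^ i
    rw [Finset.sum_range_succ' (fun i => (if i = 0 then 0 else a (i-1)) * x ^ i) n]
    simp only [Nat.add_sub_cancel, Nat.succ_ne_zero, if_false, if_pos, zero_mul, add_zero,
      reduceIte]
    rw [h.1 x, Finset.mul_sum]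
    exact Finset.sum_congr rfl fun i _ => by ring
  · have h2 : m ≠ 0 := by omega
    simp only [if_neg h2]
    exact h.2 (m-1) (by omega)

/-- coefficients of `(x - c) * F x`. -/
def xsub (c : ℂ) (a : ℕ → ℂ) : ℕ → ℂ := fun i => (if i = 0 then 0 else a (i - 1)) - c * a i

lemma xsub_succ (c : ℂ) (a : ℕ → ℂ) (m : ℕ) : xsub c a (m+1) = a m - c * a (m+1) := by
  simp [xsub]

lemma xsub_zero (c : ℂ) (a : ℕ → ℂ) : xsub c a 0 = - (c * a 0) := by simp [xsub]

lemma mul_xsub {n F a} (c : ℂ) (h : BKPC n F a) :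
    BKPC (n+1) (fun x => (x - c) * F x) (xsub c a) := by
  have h1 := (h.shift).sub ((h.pad (Nat.le_succ n)).smul c)
  exact (h1.congr' (fun x => by ring)).coeff_congr (fun i => rfl)

/-- coefficients of `(c - x) * F x`. -/
def csub (c : ℂ) (a : ℕ → ℂ) : ℕ → ℂ := fun i => c * a i - (if i = 0 then 0 else a (i - 1))

lemma csub_succ (c : ℂ) (a : ℕ → ℂ) (m : ℕ) : csub c a (m+1) = c * a (m+1) - a m := by
  simp [csub]

lemma mul_csub {n F a} (c : ℂ) (h : BKPC n F a) :
    BKPC (n+1) (fun x => (c - x) * F x) (csub c a) := by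
  have h1 := ((h.pad (Nat.le_succ n)).smul c).sub h.shift
  exact (h1.congr' (fun x => by ring)).coeff_congr (fun i => rfl)

/-- extraction of coefficients from two representations. -/
lemma extract {n F a b} (ha : BKPC n F a) (hb : BKPC n F b) : ∀ m, a m = b m := by
  intro m
  by_cases hm : n ≤ m
  · rw [ha.2 m hm, hb.2 m hm]
  push_neg at hm
  let p : Polynomial ℂ := ∑ i ∈ range n, Polynomial.C (a i) * Polynomial.X ^ i
  let q : Polynomial ℂ := ∑ i ∈ range n, Polynomial.C (b i) * Polynomial.X ^ i
  have hpq : p = q := by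
    apply Polynomial.funext
    intro x
    simp only [p, q, Polynomial.eval_finset_sum, Polynomial.eval_mul, Polynomial.eval_C,
      Polynomial.eval_pow, Polynomial.eval_X]
    rw [← ha.1 x, ← hb.1 x]
  have hc : ∀ c : ℕ → ℂ, (∑ i ∈ range n, Polynomial.C (c i) * Polynomial.X ^ i).coeff m = c m := by
    intro c
    rw [Polynomial.finset_sum_coeff]
    simp only [Polynomial.coeff_C_mul, Polynomial.coeff_X_pow]
    rw [Finset.sum_eq_single m (fun i _ hi => by simp [Ne.symm hi])
      (fun h => absurd (Finset.mem_range.2 hm) h)]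
    simp
  have := congrArg (fun r => Polynomial.coeff r m) hpq
  simpa only [p, q, hc] using this

/-- representation of a monomial `c * x^m`. -/
lemma monomial (c : ℂ) (m : ℕ) :
    BKPC (m+1) (fun x => c * x ^ m) (fun i => if i = m then c else 0) := by
  refine ⟨fun x => ?_, fun l hl => if_neg (by omega)⟩
  rw [Finset.sum_eq_single m (fun i _ hi => by simp [hi]) (by intro h; simp at h)]
  simp

end BKPC

section Analysis

variable {g : ℕ}

lemma update_eq_add (t : Fin g → ℂ) (j : Fin g) (z : ℂ) :
    Function.update t j z = t + (z - t j) • (Pi.single j 1 : Fin g → ℂ) := by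
  funext i
  by_cases h : i = j
  · subst h; simp [Function.update_self]
  · simp [Function.update_of_ne h, Pi.single_eq_of_ne h]

lemma pd_eq_fderiv (F : (Fin g → ℂ) → ℂ) (t : Fin g → ℂ) (j : Fin g)
    (hF : DifferentiableAt ℂ F t) :
    pd j F t = fderiv ℂ F t (Pi.single j 1) := by
  have hγ : HasDerivAt (fun z : ℂ => t + (z - t j) • (Pi.single j 1 : Fin g → ℂ))
      (Pi.single j 1) (t j) := by
    simpa using (((hasDerivAt_id (t j)).sub_const (t j)).smul_const
      (Pi.single j 1 : Fin g → ℂ)).const_add t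
  have hcomp : HasDerivAt (fun z : ℂ => F (t + (z - t j) • (Pi.single j 1 : Fin g → ℂ)))
      (fderiv ℂ F t (Pi.single j 1)) (t j) := by
    have hF' : HasFDerivAt F (fderiv ℂ F t) (t + (t j - t j) • (Pi.single j 1 : Fin g → ℂ)) := by
      simpa using hF.hasFDerivAt
    exact (hF'.comp_hasDerivAt (t j) hγ)
  have : (fun z : ℂ => F (Function.update t j z))
      = fun z : ℂ => F (t + (z - t j) • (Pi.single j 1 : Fin g → ℂ)) := by
    funext z; rw [update_eq_add]
  rw [pd, this, hcomp.deriv]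

lemma pd_pd_eq (W : (Fin g → ℂ) → ℂ) (hW : AnalyticOnNhd ℂ W Set.univ)
    (t : Fin g → ℂ) (i j : Fin g) :
    pd i (pd j W) t = fderiv ℂ (fderiv ℂ W) t (Pi.single i 1) (Pi.single j 1) := by
  have hcd : ContDiff ℂ 2 W := hW.contDiff
  have hdW : Differentiable ℂ W := hcd.differentiable (by norm_num)
  have hdf : Differentiable ℂ (fderiv ℂ W) := by
    have := (contDiff_succ_iff_fderiv (n := 1)).1 (by exact_mod_cast hcd)
    exact this.2.2.differentiable (by norm_num)
  have hpdj : pd j W = fun y => fderiv ℂ W y (Pi.single j 1) := by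
    funext y; exact pd_eq_fderiv W y j (hdW y)
  rw [hpdj]
  set u : Fin g → ℂ := Pi.single j 1
  set A : ((Fin g → ℂ) →L[ℂ] ℂ) →L[ℂ] ℂ := ContinuousLinearMap.apply ℂ ℂ u
  have hA : (fun y => fderiv ℂ W y u) = fun y => A (fderiv ℂ W y) := rfl
  have hdA : DifferentiableAt ℂ (fun y => A (fderiv ℂ W y)) t :=
    (A.differentiable.comp hdf) t
  rw [hA, pd_eq_fderiv _ t i hdA]
  have : fderiv ℂ (fun y => A (fderiv ℂ W y)) t
      = A.comp (fderiv ℂ (fderiv ℂ W) t) := by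
    have hc : (fun y => A (fderiv ℂ W y)) = ⇑A ∘ fderiv ℂ W := rfl
    rw [hc, fderiv_comp t (A.differentiableAt) (hdf t), A.fderiv]
  rw [this]
  rfl

lemma pd_comm (W : (Fin g → ℂ) → ℂ) (hW : AnalyticOnNhd ℂ W Set.univ)
    (t : Fin g → ℂ) (i j : Fin g) :
    pd i (pd j W) t = pd j (pd i W) t := by
  rw [pd_pd_eq W hW t i j, pd_pd_eq W hW t j i]
  have hcd : ContDiff ℂ 2 W := hW.contDiff
  exact (hcd.contDiffAt.isSymmSndFDerivAt (by norm_num)) _ _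

end Analysis

section Struct

variable {g : ℕ}

/-- the label `l` is an admissible coordinate label. -/
def BKR (g l : ℕ) : Prop := l % 2 = 0 ∧ 1 ≤ l ∧ l ≤ 2*g

instance (g l : ℕ) : Decidable (BKR g l) := by unfold BKR; infer_instance

lemma pd_zero_fun (j : Fin g) : pd j (fun _ => (0:ℂ)) = fun _ => 0 := by
  funext t; simp [pd]

lemma pde_zero_fun (l : ℕ) : pde g l (fun _ => (0:ℂ)) = fun _ => 0 := by
  unfold pde
  split
  · exact pd_zero_fun _
  · rfl

lemma pde_out {l : ℕ} (h : ¬ BKR g l) (F : (Fin g → ℂ) → ℂ) : pde g l F = fun _ => 0 :=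
  dif_neg h

lemma pde_in {l : ℕ} (h : BKR g l) (F : (Fin g → ℂ) → ℂ) :
    pde g l F = pd ⟨g - l/2, by obtain ⟨h1,h2,h3⟩ := h; omega⟩ F :=
  dif_pos h

lemma pe2_out_left {a b : ℕ} (h : ¬ BKR g a) (W : (Fin g → ℂ) → ℂ) (v : Fin g → ℂ) :
    pe2 g W a b v = 0 := by
  unfold pe2; rw [pde_out h]

lemma pe2_out_right {a b : ℕ} (h : ¬ BKR g b) (W : (Fin g → ℂ) → ℂ) (v : Fin g → ℂ) :
    pe2 g W a b v = 0 := by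
  unfold pe2; rw [pde_out h, pde_zero_fun]

lemma pe4_out {a b c d : ℕ} (W : (Fin g → ℂ) → ℂ) (v : Fin g → ℂ)
    (h : ¬ BKR g a ∨ ¬ BKR g b ∨ ¬ BKR g c ∨ ¬ BKR g d) :
    pe4 g W a b c d v = 0 := by
  unfold pe4
  rcases h with h | h | h | h <;> simp [pde_out h, pde_zero_fun]

lemma pe2_symm (W : (Fin g → ℂ) → ℂ) (hW : AnalyticOnNhd ℂ W Set.univ)
    (a b : ℕ) (v : Fin g → ℂ) : pe2 g W a b v = pe2 g W b a v := by
  by_cases ha : BKR g a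
  · by_cases hb : BKR g b
    · unfold pe2
      rw [pde_in ha, pde_in hb, pde_in hb, pde_in ha]
      exact pd_comm W hW v _ _
    · rw [pe2_out_right hb, pe2_out_left hb]
  · rw [pe2_out_left ha, pe2_out_right ha]

lemma notBKR_zero : ¬ BKR g 0 := by rintro ⟨_, h, _⟩; omega

lemma notBKR_big {l : ℕ} (h : 2*g < l) : ¬ BKR g l := by rintro ⟨_, _, h2⟩; omega

end Struct

section Main

open Finset BKPC

variable (g : ℕ) (ν : ℤ → ℂ) (W : (Fin g → ℂ) → ℂ) (v : Fin g → ℂ)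

/-! ### Coefficient functions -/

/-- coefficients (in the first variable) of the inner double sum of `Efun`. -/
noncomputable def sfc (y : ℂ) (i : ℕ) : ℂ :=
  ∑ j ∈ range g, pe2 g W (2*g - 2*i) (2*g - 2*j) v * y^j

/-- the sum `Σ_{j<g} 𝒫_{2r, 2g-2j} y^j`. -/
noncomputable def sfP (r : ℕ) (y : ℂ) : ℂ :=
  ∑ j ∈ range g, pe2 g W (2*r) (2*g - 2*j) v * y^j

lemma sfc_vanish (y : ℂ) {m : ℕ} (hm : g ≤ m) : sfc g W v y m = 0 := by
  unfold sfc
  refine Finset.sum_eq_zero fun j _ => ?_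
  rw [show 2*g - 2*m = 0 by omega, pe2_out_left notBKR_zero, zero_mul]

lemma sfc_eq_sfP (y : ℂ) {r : ℕ} (h1 : 1 ≤ r) (h2 : r ≤ g) :
    sfc g W v y (g - r) = sfP g W v r y := by
  unfold sfc sfP
  rw [show 2*g - 2*(g-r) = 2*r by omega]

lemma sfP_vanish (y : ℂ) {r : ℕ} (hr : g < r) : sfP g W v r y = 0 := by
  unfold sfP
  refine Finset.sum_eq_zero fun j _ => ?_
  rw [pe2_out_left (notBKR_big (by omega)), zero_mul]

lemma sfc_guard (y : ℂ) {r : ℕ} (h1 : 1 ≤ r) :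
    (if r ≤ g then sfc g W v y (g - r) else 0) = sfP g W v r y := by
  by_cases h : r ≤ g
  · rw [if_pos h, sfc_eq_sfP g W v y h1 h]
  · rw [if_neg h, sfP_vanish g W v y (by omega)]

lemma SS_rep (y : ℂ) :
    BKPC g (fun x => ∑ i : Fin g, ∑ j : Fin g,
      pe2 g W (2*g - 2*(i:ℕ)) (2*g - 2*(j:ℕ)) v * x^(i:ℕ) * y^(j:ℕ)) (sfc g W v y) := by
  constructor
  · intro x
    show (∑ i : Fin g, ∑ j : Fin g,
      pe2 g W (2*g - 2*(i:ℕ)) (2*g - 2*(j:ℕ)) v * x^(i:ℕ) * y^(j:ℕ)) = _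
    refine (Fin.sum_univ_eq_sum_range (fun i => ∑ j : Fin g,
      pe2 g W (2*g - 2*i) (2*g - 2*(j:ℕ)) v * x^i * y^(j:ℕ)) g).trans ?_
    refine Finset.sum_congr rfl fun i _ => ?_
    rw [sfc, Finset.sum_mul]
    exact (Fin.sum_univ_eq_sum_range
      (fun j => pe2 g W (2*g - 2*i) (2*g - 2*j) v * x^i * y^j) g).trans
      (Finset.sum_congr rfl fun j _ => by ring)
  · intro m hm; exact sfc_vanish g W v y hm

/-- first-variable coefficients of the part of `f` without `x` from `(e1+e2)`. -/
noncomputable def afc (y : ℂ) (i : ℕ) : ℂ :=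
  if i < g+2 then y^i * (2 * ν (4*(g:ℤ)+4-4*(i:ℤ)) + ν (4*(g:ℤ)+2-4*(i:ℤ)) * y) else 0

noncomputable def bfc (y : ℂ) (i : ℕ) : ℂ :=
  if i < g+2 then y^i * ν (4*(g:ℤ)+2-4*(i:ℤ)) else 0

noncomputable def ffc (y : ℂ) : ℕ → ℂ :=
  fun i => afc g ν y i + (if i = 0 then 0 else bfc g ν y (i-1))

lemma ff_rep (y : ℂ) : BKPC (g+3) (fun x => ffun g ν x y) (ffc g ν y) := by
  have hA : BKPC (g+2) (fun x => ∑ i ∈ range (g+2), afc g ν y i * x^i) (afc g ν y) :=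
    ⟨fun x => rfl, fun m hm => if_neg (by omega)⟩
  have hB : BKPC (g+2) (fun x => ∑ i ∈ range (g+2), bfc g ν y i * x^i) (bfc g ν y) :=
    ⟨fun x => rfl, fun m hm => if_neg (by omega)⟩
  have h := (hA.pad (by omega)).add hB.shift
  refine (h.congr' fun x => ?_).coeff_congr fun i => rfl
  unfold ffun
  rw [Finset.mul_sum, ← Finset.sum_add_distrib]
  refine Finset.sum_congr rfl fun i hi => ?_
  have hi' : i < g + 2 := Finset.mem_range.1 hi
  rw [afc, bfc, if_pos hi', if_pos hi']
  ring

/-- coefficients (in the first variable) of `Efun`. -/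
noncomputable def ecf (y : ℂ) : ℕ → ℂ := fun m =>
  xsub y (ffc g ν y) m - xsub y (xsub y (xsub y (sfc g W v y))) m

lemma E_rep (y : ℂ) :
    BKPC (g+4) (fun x => Efun g ν W v x y) (ecf g ν W v y) := by
  have h1 := (ff_rep g ν y).mul_xsub y
  have h2 := (((SS_rep g W v y).mul_xsub y).mul_xsub y).mul_xsub y
  have h := h1.sub (h2.pad (by omega))
  refine (h.congr' fun x => ?_).coeff_congr fun i => rfl
  show Efun g ν W v x y = _
  unfold Efun
  ring

/-! ### Evaluation of the `f`-coefficients -/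

lemma xsub_eval (c : ℂ) (a : ℕ → ℂ) {m : ℕ} (hm : 1 ≤ m) :
    xsub c a m = a (m-1) - c * a m := by
  unfold xsub; rw [if_neg (by omega)]

lemma csub_eval (c : ℂ) (a : ℕ → ℂ) {m : ℕ} (hm : 1 ≤ m) :
    csub c a m = c * a m - a (m-1) := by
  unfold csub; rw [if_neg (by omega)]

lemma ffc_top (hνm2 : ν (-2) = 0) (y : ℂ) : ffc g ν y (g+2) = 0 := by
  unfold ffc afc bfc
  rw [if_neg (by omega), if_neg (by omega), if_pos (by omega)]
  rw [show (4*(g:ℤ)+2-4*((g+2-1 : ℕ):ℤ)) = -2 by push_cast; ring, hνm2]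
  ring

lemma ffc_g1 (hνm2 : ν (-2) = 0) (y : ℂ) : ffc g ν y (g+1) = 2 * ν 0 * y^(g+1) + ν 2 * y^g := by
  unfold ffc afc bfc
  rw [if_pos (by omega), if_neg (by omega), if_pos (by omega)]
  rw [show (4*(g:ℤ)+4-4*((g+1 : ℕ):ℤ)) = 0 by push_cast; ring,
    show (4*(g:ℤ)+2-4*((g+1 : ℕ):ℤ)) = -2 by push_cast; ring, hνm2,
    show ((g+1 : ℕ) - 1 : ℕ) = g by omega,
    show (4*(g:ℤ)+2-4*((g : ℕ):ℤ)) = 2 by push_cast; ring]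
  ring

lemma ffc_g0 (hg : 1 ≤ g) (y : ℂ) : ffc g ν y g = 2 * ν 4 * y^g + ν 2 * y^(g+1) + ν 6 * y^(g-1) := by
  unfold ffc afc bfc
  rw [if_pos (by omega), if_neg (by omega), if_pos (by omega)]
  rw [show (4*(g:ℤ)+4-4*((g : ℕ):ℤ)) = 4 by push_cast; ring,
    show (4*(g:ℤ)+2-4*((g : ℕ):ℤ)) = 2 by push_cast; ring,
    show (4*(g:ℤ)+2-4*((g-1 : ℕ):ℤ)) = 6 by rw [Nat.cast_sub hg]; push_cast; ring]
  ring

lemma ffc_gm1 (hg : 1 ≤ g) (y : ℂ) :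
    ffc g ν y (g-1)
      = y^(g-1) * (2*ν 8 + ν 6*y) + (if 2 ≤ g then ν 10 * y^(g-2) else 0) := by
  unfold ffc afc bfc
  rw [if_pos (by omega : g-1 < g+2)]
  rw [show (4*(g:ℤ)+4-4*((g-1:ℕ):ℤ)) = 8 by rw [Nat.cast_sub hg]; push_cast; ring,
      show (4*(g:ℤ)+2-4*((g-1:ℕ):ℤ)) = 6 by rw [Nat.cast_sub hg]; push_cast; ring]
  by_cases h2 : 2 ≤ g
  · rw [if_neg (by omega : ¬(g-1 = 0)), if_pos (by omega : g-1-1 < g+2), if_pos h2,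
      show (g-1-1:ℕ) = g-2 by omega,
      show (4*(g:ℤ)+2-4*((g-2:ℕ):ℤ)) = 10 by rw [Nat.cast_sub h2]; push_cast; ring]
    ring
  · rw [if_pos (by omega : g-1 = 0), if_neg h2]

/-! ### The closed forms -/

/-- `G(y)`, the top (`x^{g+2}`) coefficient of `E(x,y)`. -/
noncomputable def Gt (y : ℂ) : ℂ := 2*ν 0*y^(g+1) + ν 2*y^g - sfP g W v 1 y

/-- `H(y)`, minus the `x^{g+1}` coefficient of `E(x,y)`. -/
noncomputable def Hm (y : ℂ) : ℂ :=
  2*ν 0*y^(g+2) - 2*ν 4*y^g - ν 6*y^(g-1) + sfP g W v 2 y - 3*(y*sfP g W v 1 y)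

/-- `M(y)`, minus the `x^{g}` coefficient of `E(x,y)`. -/
noncomputable def Mm (y : ℂ) : ℂ :=
  ν 2*y^(g+2) + 2*ν 4*y^(g+1) - 2*ν 8*y^(g-1) - (if 2 ≤ g then ν 10*y^(g-2) else 0)
    + sfP g W v 3 y - 3*(y*sfP g W v 2 y) + 3*(y*(y*sfP g W v 1 y))

section ecfEval

variable (y : ℂ)

lemma ecf_top (hg : 1 ≤ g) (hνm2 : ν (-2) = 0) : ecf g ν W v y (g+2) = Gt g ν W v y := by
  have h0 : ∀ m, g ≤ m → sfc g W v y m = 0 := fun m hm => sfc_vanish g W v y hm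
  set a := sfc g W v y with ha
  have x1g2 : xsub y a (g+2) = 0 := by
    rw [xsub_eval _ _ (by omega), show g+2-1 = g+1 by omega, h0 _ (by omega), h0 _ (by omega)]
    ring
  have x1g1 : xsub y a (g+1) = 0 := by
    rw [xsub_eval _ _ (by omega), show g+1-1 = g by omega, h0 _ (by omega), h0 _ (by omega)]
    ring
  have x1g : xsub y a g = a (g-1) := by
    rw [xsub_eval _ _ hg, h0 _ le_rfl]; ring
  have x2g2 : xsub y (xsub y a) (g+2) = 0 := by
    rw [xsub_eval _ _ (by omega), show g+2-1 = g+1 by omega, x1g1, x1g2]; ring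
  have x2g1 : xsub y (xsub y a) (g+1) = a (g-1) := by
    rw [xsub_eval _ _ (by omega), show g+1-1 = g by omega, x1g, x1g1]; ring
  have x3g2 : xsub y (xsub y (xsub y a)) (g+2) = a (g-1) := by
    rw [xsub_eval _ _ (by omega), show g+2-1 = g+1 by omega, x2g1, x2g2]; ring
  unfold ecf
  rw [x3g2, xsub_eval y (ffc g ν y) (by omega), show g+2-1 = g+1 by omega,
    ffc_top g ν hνm2 y, ffc_g1 g ν hνm2 y, ha, sfc_eq_sfP g W v y le_rfl hg]
  unfold Gt
  ring

lemma ecf_g1 (hg : 1 ≤ g) (hνm2 : ν (-2) = 0) : ecf g ν W v y (g+1) = - Hm g ν W v y := by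
  have h0 : ∀ m, g ≤ m → sfc g W v y m = 0 := fun m hm => sfc_vanish g W v y hm
  set a := sfc g W v y with ha
  have x1g1 : xsub y a (g+1) = 0 := by
    rw [xsub_eval _ _ (by omega), show g+1-1 = g by omega, h0 _ (by omega), h0 _ (by omega)]
    ring
  have x1g : xsub y a g = a (g-1) := by
    rw [xsub_eval _ _ hg, h0 _ le_rfl]; ring
  have x1gm1 : xsub y a (g-1) = (if 2 ≤ g then a (g-2) else 0) - y * a (g-1) := by
    by_cases h2 : 2 ≤ g
    · rw [xsub_eval _ _ (by omega : 1 ≤ g-1), show g-1-1 = g-2 by omega, if_pos h2]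
    · have hg1 : g = 1 := by omega
      subst hg1
      simp [xsub]
  have x2g1 : xsub y (xsub y a) (g+1) = a (g-1) := by
    rw [xsub_eval _ _ (by omega), show g+1-1 = g by omega, x1g, x1g1]; ring
  have x2g : xsub y (xsub y a) g
      = (if 2 ≤ g then a (g-2) else 0) - 2*(y * a (g-1)) := by
    rw [xsub_eval _ _ hg, x1gm1, x1g]; ring
  have x3g1 : xsub y (xsub y (xsub y a)) (g+1)
      = (if 2 ≤ g then a (g-2) else 0) - 3*(y * a (g-1)) := by
    rw [xsub_eval _ _ (by omega), show g+1-1 = g by omega, x2g, x2g1]; ring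
  unfold ecf
  rw [x3g1, xsub_eval y (ffc g ν y) (by omega), show g+1-1 = g by omega,
    ffc_g0 g ν hg y, ffc_g1 g ν hνm2 y, ha, sfc_guard g W v y (by omega : 1 ≤ 2),
    sfc_eq_sfP g W v y le_rfl hg]
  unfold Hm
  ring

lemma ecf_g (hg : 1 ≤ g) (hνm2 : ν (-2) = 0) : ecf g ν W v y g = - Mm g ν W v y := by
  have h0 : ∀ m, g ≤ m → sfc g W v y m = 0 := fun m hm => sfc_vanish g W v y hm
  set a := sfc g W v y with ha
  have x1g : xsub y a g = a (g-1) := by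
    rw [xsub_eval _ _ hg, h0 _ le_rfl]; ring
  have x1gm1 : xsub y a (g-1) = (if 2 ≤ g then a (g-2) else 0) - y * a (g-1) := by
    by_cases h2 : 2 ≤ g
    · rw [xsub_eval _ _ (by omega : 1 ≤ g-1), show g-1-1 = g-2 by omega, if_pos h2]
    · have hg1 : g = 1 := by omega
      subst hg1
      simp [xsub]
  have x2g : xsub y (xsub y a) g
      = (if 2 ≤ g then a (g-2) else 0) - 2*(y * a (g-1)) := by
    rw [xsub_eval _ _ hg, x1gm1, x1g]; ring
  have x2gm1 : xsub y (xsub y a) (g-1)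
      = (if 3 ≤ g then a (g-3) else 0) - 2*(y * (if 2 ≤ g then a (g-2) else 0))
        + y^2 * a (g-1) := by
    by_cases h2 : 2 ≤ g
    · have x1gm2 : xsub y a (g-2) = (if 3 ≤ g then a (g-3) else 0) - y * a (g-2) := by
        by_cases h3 : 3 ≤ g
        · rw [xsub_eval _ _ (by omega : 1 ≤ g-2), show g-2-1 = g-3 by omega, if_pos h3]
        · have hg2 : g = 2 := by omega
          subst hg2
          simp [xsub]
      rw [xsub_eval _ _ (by omega : 1 ≤ g-1), show g-1-1 = g-2 by omega, x1gm2, x1gm1,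
        if_pos h2]
      ring
    · have hg1 : g = 1 := by omega
      subst hg1
      norm_num [xsub]
      ring
  have x3g : xsub y (xsub y (xsub y a)) g
      = (if 3 ≤ g then a (g-3) else 0) - 3*(y * (if 2 ≤ g then a (g-2) else 0))
        + 3*(y^2 * a (g-1)) := by
    rw [xsub_eval _ _ hg, x2g, x2gm1]; ring
  unfold ecf
  rw [x3g, xsub_eval y (ffc g ν y) hg, ffc_gm1 g ν hg y, ffc_g0 g ν hg y, ha,
    sfc_guard g W v y (by omega : 1 ≤ 2), sfc_guard g W v y (by omega : 1 ≤ 3),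
    sfc_eq_sfP g W v y le_rfl hg]
  unfold Mm
  ring

end ecfEval

/-! ### Antisymmetry of `E` -/

lemma ff_symm (x y : ℂ) : ffun g ν x y = ffun g ν y x := by
  unfold ffun
  exact Finset.sum_congr rfl fun i _ => by ring

lemma Efun_antisym (hW : AnalyticOnNhd ℂ W Set.univ) (x y : ℂ) :
    Efun g ν W v x y = - Efun g ν W v y x := by
  unfold Efun
  have hS : (∑ i : Fin g, ∑ j : Fin g,
        pe2 g W (2*g - 2*(i:ℕ)) (2*g - 2*(j:ℕ)) v * y^(i:ℕ) * x^(j:ℕ))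
      = ∑ i : Fin g, ∑ j : Fin g,
        pe2 g W (2*g - 2*(i:ℕ)) (2*g - 2*(j:ℕ)) v * x^(i:ℕ) * y^(j:ℕ) := by
    rw [Finset.sum_comm]
    refine Finset.sum_congr rfl fun j _ => Finset.sum_congr rfl fun i _ => ?_
    rw [pe2_symm W hW]
    ring
  rw [show ffun g ν y x = ffun g ν x y from ff_symm g ν y x, hS]
  ring

/-! ### Representations of the closed forms -/

lemma BKPC.zero (n : ℕ) : BKPC n (fun _ => (0:ℂ)) (fun _ => 0) := ⟨by simp, by simp⟩

noncomputable def sfPc (r : ℕ) : ℕ → ℂ := fun j => pe2 g W (2*r) (2*g - 2*j) v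

lemma sfPc_vanish (r : ℕ) {m : ℕ} (hm : g ≤ m) : sfPc g W v r m = 0 := by
  unfold sfPc
  rw [show 2*g - 2*m = 0 by omega, pe2_out_right notBKR_zero]

lemma sfP_rep (r : ℕ) : BKPC g (fun y => sfP g W v r y) (sfPc g W v r) :=
  ⟨fun y => rfl, fun m hm => sfPc_vanish g W v r hm⟩

noncomputable def gtc : ℕ → ℂ := fun i =>
  (if i = g+1 then 2*ν 0 else 0) + (if i = g then ν 2 else 0) - sfPc g W v 1 i

lemma Gt_rep : BKPC (g+2) (Gt g ν W v) (gtc g ν W v) := by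
  have h1 := BKPC.monomial (2*ν 0) (g+1)
  have h2 := (BKPC.monomial (ν 2) g).pad (show g+1 ≤ g+2 by omega)
  have h3 := (sfP_rep g W v 1).pad (show g ≤ g+2 by omega)
  exact ((h1.add h2).sub h3).congr' fun y => rfl

noncomputable def hmc : ℕ → ℂ := fun i =>
  (if i = g+2 then 2*ν 0 else 0) - (if i = g then 2*ν 4 else 0)
    - (if i = g-1 then ν 6 else 0) + sfPc g W v 2 i
    - 3*(if i = 0 then 0 else sfPc g W v 1 (i-1))

lemma Hm_rep : BKPC (g+3) (Hm g ν W v) (hmc g ν W v) := by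
  have h1 := BKPC.monomial (2*ν 0) (g+2)
  have h2 := (BKPC.monomial (2*ν 4) g).pad (show g+1 ≤ g+3 by omega)
  have h3 := (BKPC.monomial (ν 6) (g-1)).pad (show g-1+1 ≤ g+3 by omega)
  have h4 := (sfP_rep g W v 2).pad (show g ≤ g+3 by omega)
  have h5 := (((sfP_rep g W v 1).shift).smul 3).pad (show g+1 ≤ g+3 by omega)
  exact ((((h1.sub h2).sub h3).add h4).sub h5).congr' fun y => rfl

noncomputable def mmc : ℕ → ℂ := fun i =>
  (if i = g+2 then ν 2 else 0) + (if i = g+1 then 2*ν 4 else 0)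
    - (if i = g-1 then 2*ν 8 else 0) - (if 2 ≤ g ∧ i = g-2 then ν 10 else 0)
    + sfPc g W v 3 i - 3*(if i = 0 then 0 else sfPc g W v 2 (i-1))
    + 3*(if i = 0 then 0 else (if i-1 = 0 then 0 else sfPc g W v 1 (i-1-1)))

lemma Mm_rep : BKPC (g+3) (Mm g ν W v) (mmc g ν W v) := by
  have h1 := BKPC.monomial (ν 2) (g+2)
  have h2 := (BKPC.monomial (2*ν 4) (g+1)).pad (show g+2 ≤ g+3 by omega)
  have h3 := (BKPC.monomial (2*ν 8) (g-1)).pad (show g-1+1 ≤ g+3 by omega)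
  have h10 : BKPC (g+3) (fun y => if 2 ≤ g then ν 10*y^(g-2) else 0)
      (fun i => if 2 ≤ g ∧ i = g-2 then ν 10 else 0) := by
    by_cases hyp2 : 2 ≤ g
    · have hmn := (BKPC.monomial (ν 10) (g-2)).pad (show g-2+1 ≤ g+3 by omega)
      exact (hmn.congr' fun y => by rw [if_pos hyp2]).coeff_congr fun i => by simp [hyp2]
    · exact ((BKPC.zero (g+3)).congr' fun y => by rw [if_neg hyp2]).coeff_congr
        fun i => by simp [hyp2]
  have h4 := (sfP_rep g W v 3).pad (show g ≤ g+3 by omega)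
  have h5 := (((sfP_rep g W v 2).shift).smul 3).pad (show g+1 ≤ g+3 by omega)
  have h6 := ((((sfP_rep g W v 1).shift).shift).smul 3).pad (show g+2 ≤ g+3 by omega)
  exact ((((((h1.add h2).sub h3).sub h10).add h4).sub h5).add h6).congr' fun y => rfl

/-! ### Coefficient evaluations of the closed forms -/

lemma gtc_g1 : gtc g ν W v (g+1) = 2*ν 0 := by
  unfold gtc sfPc
  rw [if_pos rfl, if_neg (by omega), show 2*g - 2*(g+1) = 0 by omega,
    pe2_out_right notBKR_zero]
  ring

lemma gtc_g : gtc g ν W v g = ν 2 := by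
  unfold gtc sfPc
  rw [if_neg (by omega), if_pos rfl, show 2*g - 2*g = 0 by omega,
    pe2_out_right notBKR_zero]
  ring

lemma gtc_gk {k : ℕ} (hk1 : 1 ≤ k) (hkg : k ≤ g) :
    gtc g ν W v (g-k) = - pe2 g W 2 (2*k) v := by
  unfold gtc sfPc
  rw [if_neg (by omega), if_neg (by omega), show 2*g - 2*(g-k) = 2*k by omega]
  ring

lemma hmc_g (hg : 1 ≤ g) : hmc g ν W v g = -(2*ν 4) - 3*pe2 g W 2 2 v := by
  unfold hmc sfPc
  rw [if_neg (by omega), if_pos rfl, if_neg (by omega), if_neg (by omega : ¬(g = 0)),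
    show 2*g - 2*g = 0 by omega, pe2_out_right notBKR_zero,
    show 2*g - 2*(g-1) = 2 by omega]
  ring

lemma shift_term_eval (hg : 1 ≤ g) {k : ℕ} (hk1 : 1 ≤ k) (hkg : k ≤ g) (r : ℕ) :
    (if g-k = 0 then 0 else sfPc g W v r (g-k-1)) = pe2 g W (2*r) (2*k+2) v := by
  by_cases hkg' : k = g
  · rw [if_pos (by omega)]
    exact (pe2_out_right (notBKR_big (by omega)) W v).symm
  · rw [if_neg (by omega)]
    unfold sfPc
    rw [show 2*g - 2*(g-k-1) = 2*k+2 by omega]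

lemma shift2_term_eval (hg : 1 ≤ g) {k : ℕ} (hk1 : 1 ≤ k) (hkg : k ≤ g) (r : ℕ) :
    (if g-k = 0 then 0 else if g-k-1 = 0 then 0 else sfPc g W v r (g-k-1-1))
      = pe2 g W (2*r) (2*k+4) v := by
  by_cases h1 : k = g
  · rw [if_pos (by omega)]
    exact (pe2_out_right (notBKR_big (by omega)) W v).symm
  by_cases h2 : k = g-1
  · rw [if_neg (by omega), if_pos (by omega)]
    exact (pe2_out_right (notBKR_big (by omega)) W v).symm
  · rw [if_neg (by omega), if_neg (by omega)]
    unfold sfPc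
    rw [show 2*g - 2*(g-k-1-1) = 2*k+4 by omega]

lemma hmc_gk (hg : 1 ≤ g) {k : ℕ} (hk1 : 1 ≤ k) (hkg : k ≤ g) :
    hmc g ν W v (g-k) = -(kd 1 k * ν 6) + pe2 g W 4 (2*k) v - 3*pe2 g W 2 (2*k+2) v := by
  unfold hmc
  rw [show sfPc g W v 2 (g-k) = pe2 g W 4 (2*k) v by
        unfold sfPc; rw [show 2*g - 2*(g-k) = 2*k by omega],
      shift_term_eval g W v hg hk1 hkg 1,
      if_neg (by omega : ¬(g-k = g+2)), if_neg (by omega : ¬(g-k = g))]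
  have e6 : (if g-k = g-1 then ν 6 else 0) = kd 1 k * ν 6 := by
    unfold kd
    by_cases hk : k = 1
    · rw [if_pos (by omega : g-k = g-1), if_pos (by omega : 1 = k)]; ring
    · rw [if_neg (by omega : ¬(g-k = g-1)), if_neg (by omega : ¬(1 = k))]; ring
  rw [e6]
  ring

lemma mmc_gk (hg : 1 ≤ g) {k : ℕ} (hk1 : 1 ≤ k) (hkg : k ≤ g) :
    mmc g ν W v (g-k)
      = -(2*(kd 1 k * ν 8)) - kd 2 k * ν 10 + pe2 g W 6 (2*k) v
        - 3*pe2 g W 4 (2*k+2) v + 3*pe2 g W 2 (2*k+4) v := by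
  unfold mmc
  rw [show sfPc g W v 3 (g-k) = pe2 g W 6 (2*k) v by
        unfold sfPc; rw [show 2*g - 2*(g-k) = 2*k by omega],
      shift_term_eval g W v hg hk1 hkg 2,
      shift2_term_eval g W v hg hk1 hkg 1,
      if_neg (by omega : ¬(g-k = g+2)), if_neg (by omega : ¬(g-k = g+1))]
  have e8 : (if g-k = g-1 then 2*ν 8 else 0) = 2*(kd 1 k * ν 8) := by
    unfold kd
    by_cases hk : k = 1
    · rw [if_pos (by omega : g-k = g-1), if_pos (by omega : 1 = k)]; ring
    · rw [if_neg (by omega : ¬(g-k = g-1)), if_neg (by omega : ¬(1 = k))]; ring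
  have e10 : (if 2 ≤ g ∧ g-k = g-2 then ν 10 else 0) = kd 2 k * ν 10 := by
    unfold kd
    by_cases hk : k = 2
    · rw [if_pos (show 2 ≤ g ∧ g-k = g-2 by omega), if_pos (by omega : 2 = k)]; ring
    · rw [if_neg (show ¬(2 ≤ g ∧ g-k = g-2) by omega), if_neg (by omega : ¬(2 = k))]; ring
  rw [e8, e10]
  ring

/-! ### The coefficient chains of the quadruple sum -/

noncomputable def W1c (e2 e3 e4 : ℂ) : ℕ → ℂ := fun i =>
  ∑ j : Fin g, ∑ k : Fin g, ∑ l : Fin g,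
    pe4 g W (2*g - 2*i) (2*g - 2*(j:ℕ)) (2*g - 2*(k:ℕ)) (2*g - 2*(l:ℕ)) v *
      e2^(j:ℕ) * e3^(k:ℕ) * e4^(l:ℕ)

noncomputable def W2c (e3 e4 : ℂ) : ℕ → ℂ := fun j =>
  ∑ k : Fin g, ∑ l : Fin g,
    pe4 g W 2 (2*g - 2*j) (2*g - 2*(k:ℕ)) (2*g - 2*(l:ℕ)) v * e3^(k:ℕ) * e4^(l:ℕ)

noncomputable def W3c (e4 : ℂ) : ℕ → ℂ := fun k =>
  ∑ l : Fin g, pe4 g W 2 2 (2*g - 2*k) (2*g - 2*(l:ℕ)) v * e4^(l:ℕ)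

noncomputable def W4c : ℕ → ℂ := fun l => pe4 g W 2 2 2 (2*g - 2*l) v

lemma W1c_vanish (e2 e3 e4 : ℂ) {m : ℕ} (hm : g ≤ m) : W1c g W v e2 e3 e4 m = 0 := by
  unfold W1c
  rw [show 2*g - 2*m = 0 by omega]
  refine Finset.sum_eq_zero fun j _ => Finset.sum_eq_zero fun k _ =>
    Finset.sum_eq_zero fun l _ => ?_
  rw [pe4_out W v (Or.inl notBKR_zero), zero_mul, zero_mul, zero_mul]

lemma W2c_vanish (e3 e4 : ℂ) {m : ℕ} (hm : g ≤ m) : W2c g W v e3 e4 m = 0 := by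
  unfold W2c
  rw [show 2*g - 2*m = 0 by omega]
  refine Finset.sum_eq_zero fun k _ => Finset.sum_eq_zero fun l _ => ?_
  rw [pe4_out W v (Or.inr (Or.inl notBKR_zero)), zero_mul, zero_mul]

lemma W3c_vanish (e4 : ℂ) {m : ℕ} (hm : g ≤ m) : W3c g W v e4 m = 0 := by
  unfold W3c
  rw [show 2*g - 2*m = 0 by omega]
  refine Finset.sum_eq_zero fun l _ => ?_
  rw [pe4_out W v (Or.inr (Or.inr (Or.inl notBKR_zero))), zero_mul]

lemma W4c_vanish {m : ℕ} (hm : g ≤ m) : W4c g W v m = 0 := by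
  unfold W4c
  rw [show 2*g - 2*m = 0 by omega]
  exact pe4_out W v (Or.inr (Or.inr (Or.inr notBKR_zero)))

lemma quad_rep (e2 e3 e4 : ℂ) :
    BKPC g (fun x => ∑ i : Fin g, ∑ j : Fin g, ∑ k : Fin g, ∑ l : Fin g,
      pe4 g W (2*g - 2*(i:ℕ)) (2*g - 2*(j:ℕ)) (2*g - 2*(k:ℕ)) (2*g - 2*(l:ℕ)) v *
        x^(i:ℕ) * e2^(j:ℕ) * e3^(k:ℕ) * e4^(l:ℕ)) (W1c g W v e2 e3 e4) := by
  constructor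
  · intro x
    show (∑ i : Fin g, ∑ j : Fin g, ∑ k : Fin g, ∑ l : Fin g,
      pe4 g W (2*g - 2*(i:ℕ)) (2*g - 2*(j:ℕ)) (2*g - 2*(k:ℕ)) (2*g - 2*(l:ℕ)) v *
        x^(i:ℕ) * e2^(j:ℕ) * e3^(k:ℕ) * e4^(l:ℕ)) = _
    refine (Fin.sum_univ_eq_sum_range (fun i => ∑ j : Fin g, ∑ k : Fin g, ∑ l : Fin g,
      pe4 g W (2*g - 2*i) (2*g - 2*(j:ℕ)) (2*g - 2*(k:ℕ)) (2*g - 2*(l:ℕ)) v *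
        x^i * e2^(j:ℕ) * e3^(k:ℕ) * e4^(l:ℕ)) g).trans ?_
    refine Finset.sum_congr rfl fun i _ => ?_
    unfold W1c
    rw [Finset.sum_mul]
    refine Finset.sum_congr rfl fun j _ => ?_
    rw [Finset.sum_mul]
    refine Finset.sum_congr rfl fun k _ => ?_
    rw [Finset.sum_mul]
    exact Finset.sum_congr rfl fun l _ => by ring
  · intro m hm; exact W1c_vanish g W v e2 e3 e4 hm

lemma W1_rep (hg : 1 ≤ g) (e3 e4 : ℂ) :
    BKPC g (fun x => W1c g W v x e3 e4 (g-1)) (W2c g W v e3 e4) := by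
  constructor
  · intro x
    show W1c g W v x e3 e4 (g-1) = _
    unfold W1c
    rw [show 2*g - 2*(g-1) = 2 by omega]
    refine (Fin.sum_univ_eq_sum_range (fun j => ∑ k : Fin g, ∑ l : Fin g,
      pe4 g W 2 (2*g - 2*j) (2*g - 2*(k:ℕ)) (2*g - 2*(l:ℕ)) v *
        x^j * e3^(k:ℕ) * e4^(l:ℕ)) g).trans ?_
    refine Finset.sum_congr rfl fun j _ => ?_
    unfold W2c
    rw [Finset.sum_mul]
    refine Finset.sum_congr rfl fun k _ => ?_
    rw [Finset.sum_mul]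
    exact Finset.sum_congr rfl fun l _ => by ring
  · intro m hm; exact W2c_vanish g W v e3 e4 hm

lemma W2_rep (hg : 1 ≤ g) (e4 : ℂ) :
    BKPC g (fun x => W2c g W v x e4 (g-1)) (W3c g W v e4) := by
  constructor
  · intro x
    show W2c g W v x e4 (g-1) = _
    unfold W2c
    rw [show 2*g - 2*(g-1) = 2 by omega]
    refine (Fin.sum_univ_eq_sum_range (fun k => ∑ l : Fin g,
      pe4 g W 2 2 (2*g - 2*k) (2*g - 2*(l:ℕ)) v * x^k * e4^(l:ℕ)) g).trans ?_
    refine Finset.sum_congr rfl fun k _ => ?_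
    unfold W3c
    rw [Finset.sum_mul]
    exact Finset.sum_congr rfl fun l _ => by ring
  · intro m hm; exact W3c_vanish g W v e4 hm

lemma W3_rep (hg : 1 ≤ g) :
    BKPC g (fun x => W3c g W v x (g-1)) (W4c g W v) := by
  constructor
  · intro x
    show W3c g W v x (g-1) = _
    unfold W3c
    rw [show 2*g - 2*(g-1) = 2 by omega]
    refine (Fin.sum_univ_eq_sum_range (fun l =>
      pe4 g W 2 2 2 (2*g - 2*l) v * x^l) g).trans ?_
    refine Finset.sum_congr rfl fun l _ => ?_
    unfold W4c
    ring
  · intro m hm; exact W4c_vanish g W v hm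

end Main

open BKPC

/-- from Baker's fundamental four-variable identity for the functions
`𝒫_{i,j}` one deduces, for `1 ≤ k ≤ g`,
`𝒫_{2,2,2,2k} = 2𝒫_{2,2k}(3𝒫_{2,2} + 2ν₄) + 2ν₂(δ_{1,k}ν₆ - 𝒫_{4,2k} + 3𝒫_{2,2k+2})
+ 4ν₀(3𝒫_{2,2k+4} - 3𝒫_{4,2k+2} + 𝒫_{6,2k} - 2δ_{1,k}ν₈ - δ_{2,k}ν₁₀)`. -/
theorem stmt_16 (g : ℕ) (hg : 1 ≤ g) (ν : ℤ → ℂ) (hν0 : ν 0 ≠ 0) (hνm2 : ν (-2) = 0)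
    (W : (Fin g → ℂ) → ℂ) (hW : AnalyticOnNhd ℂ W Set.univ)
    (hBaker : ∀ v : Fin g → ℂ, ∀ e1 e2 e3 e4 : ℂ,
      (1/2 : ℂ) * (e2-e1) * (e3-e2) * (e3-e1) * (e4-e3) * (e4-e2) * (e4-e1) *
        ∑ i : Fin g, ∑ j : Fin g, ∑ k : Fin g, ∑ l : Fin g,
          pe4 g W (2*g - 2*(i:ℕ)) (2*g - 2*(j:ℕ)) (2*g - 2*(k:ℕ)) (2*g - 2*(l:ℕ)) v *
            e1^(i:ℕ) * e2^(j:ℕ) * e3^(k:ℕ) * e4^(l:ℕ)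
      = Efun g ν W v e2 e3 * Efun g ν W v e4 e1
        + Efun g ν W v e3 e1 * Efun g ν W v e4 e2
        + Efun g ν W v e1 e2 * Efun g ν W v e4 e3) :
    ∀ k : ℕ, 1 ≤ k → k ≤ g → ∀ v : Fin g → ℂ,
      pe4 g W 2 2 2 (2*k) v
        = 2 * pe2 g W 2 (2*k) v * (3 * pe2 g W 2 2 v + 2 * ν 4)
          + 2 * ν 2 * (kd 1 k * ν 6 - pe2 g W 4 (2*k) v + 3 * pe2 g W 2 (2*k+2) v)
          + 4 * ν 0 * (3 * pe2 g W 2 (2*k+4) v - 3 * pe2 g W 4 (2*k+2) v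
                       + pe2 g W 6 (2*k) v - 2 * kd 1 k * ν 8 - kd 2 k * ν 10) := by
  intro k hk1 hkg v
  -- Step 1 : extract the coefficient of `e1^(g+2)` in Baker's identity
  have st1 : ∀ e2 e3 e4 : ℂ,
      -((1/2*((e3-e2)*((e4-e3)*(e4-e2)))) * W1c g W v e2 e3 e4 (g-1))
        = -(Efun g ν W v e2 e3 * Gt g ν W v e4)
          - Efun g ν W v e4 e2 * Gt g ν W v e3
          + Efun g ν W v e4 e3 * Gt g ν W v e2 := by
    intro e2 e3 e4
    have hbase := quad_rep g W v e2 e3 e4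
    have hL := ((((hbase.mul_csub e4).mul_csub e3).mul_csub e2).smul
      (1/2*((e3-e2)*((e4-e3)*(e4-e2))))).pad (show g+3 ≤ g+4 by omega) |>.congr'
      (G := fun x => (1/2 : ℂ) * (e2-x) * (e3-e2) * (e3-x) * (e4-e3) * (e4-e2) * (e4-x) *
        ∑ i : Fin g, ∑ j : Fin g, ∑ k : Fin g, ∑ l : Fin g,
          pe4 g W (2*g - 2*(i:ℕ)) (2*g - 2*(j:ℕ)) (2*g - 2*(k:ℕ)) (2*g - 2*(l:ℕ)) v *
            x^(i:ℕ) * e2^(j:ℕ) * e3^(k:ℕ) * e4^(l:ℕ)) (fun x => by ring)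
    have hRL := ((((E_rep g ν W v e4).smul (-(Efun g ν W v e2 e3))).add
      ((E_rep g ν W v e3).smul (-(Efun g ν W v e4 e2)))).add
      ((E_rep g ν W v e2).smul (Efun g ν W v e4 e3))).congr'
      (G := fun x => (1/2 : ℂ) * (e2-x) * (e3-e2) * (e3-x) * (e4-e3) * (e4-e2) * (e4-x) *
        ∑ i : Fin g, ∑ j : Fin g, ∑ k : Fin g, ∑ l : Fin g,
          pe4 g W (2*g - 2*(i:ℕ)) (2*g - 2*(j:ℕ)) (2*g - 2*(k:ℕ)) (2*g - 2*(l:ℕ)) v *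
            x^(i:ℕ) * e2^(j:ℕ) * e3^(k:ℕ) * e4^(l:ℕ)) (fun x => by
        beta_reduce
        rw [hBaker v x e2 e3 e4, Efun_antisym g ν W v hW e4 x, Efun_antisym g ν W v hW e3 x]
        ring)
    have hext2 : (1/2*((e3-e2)*((e4-e3)*(e4-e2)))) *
        csub e2 (csub e3 (csub e4 (W1c g W v e2 e3 e4))) (g+2)
        = -(Efun g ν W v e2 e3) * ecf g ν W v e4 (g+2)
          + -(Efun g ν W v e4 e2) * ecf g ν W v e3 (g+2)
          + Efun g ν W v e4 e3 * ecf g ν W v e2 (g+2) :=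
      BKPC.extract hL hRL (g+2)
    have hv : ∀ m, g ≤ m → W1c g W v e2 e3 e4 m = 0 :=
      fun m hm => W1c_vanish g W v e2 e3 e4 hm
    have c10 : csub e4 (W1c g W v e2 e3 e4) (g+2) = 0 := by
      rw [csub_eval _ _ (by omega), show g+2-1 = g+1 by omega, hv _ (by omega),
        hv _ (by omega)]; ring
    have c11 : csub e4 (W1c g W v e2 e3 e4) (g+1) = 0 := by
      rw [csub_eval _ _ (by omega), show g+1-1 = g by omega, hv _ (by omega),
        hv _ (by omega)]; ring
    have c12 : csub e4 (W1c g W v e2 e3 e4) g = - W1c g W v e2 e3 e4 (g-1) := by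
      rw [csub_eval _ _ hg, hv _ le_rfl]; ring
    have c20 : csub e3 (csub e4 (W1c g W v e2 e3 e4)) (g+2) = 0 := by
      rw [csub_eval _ _ (by omega), show g+2-1 = g+1 by omega, c10, c11]; ring
    have c21 : csub e3 (csub e4 (W1c g W v e2 e3 e4)) (g+1) = W1c g W v e2 e3 e4 (g-1) := by
      rw [csub_eval _ _ (by omega), show g+1-1 = g by omega, c11, c12]; ring
    have c30 : csub e2 (csub e3 (csub e4 (W1c g W v e2 e3 e4))) (g+2)
        = - W1c g W v e2 e3 e4 (g-1) := by
      rw [csub_eval _ _ (by omega), show g+2-1 = g+1 by omega, c20, c21]; ring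
    rw [c30, ecf_top g ν W v e4 hg hνm2, ecf_top g ν W v e3 hg hνm2,
      ecf_top g ν W v e2 hg hνm2] at hext2
    linear_combination hext2
  -- Step 2 : extract the coefficient of `e2^(g+1)`
  have st2 : ∀ e3 e4 : ℂ,
      -((1/2*(e4-e3)) * W2c g W v e3 e4 (g-1))
        = Hm g ν W v e3 * Gt g ν W v e4 - Gt g ν W v e3 * Hm g ν W v e4
          + 2*ν 0 * Efun g ν W v e4 e3 := by
    intro e3 e4
    have hbase := W1_rep g W v hg e3 e4
    have hL := (((hbase.mul_csub e4).mul_csub e3).smul (-(1/2*(e4-e3)))).pad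
      (show g+2 ≤ g+4 by omega) |>.congr'
      (G := fun x => -((1/2*((e3-x)*((e4-e3)*(e4-x)))) * W1c g W v x e3 e4 (g-1)))
      (fun x => by ring)
    have hRL := ((((E_rep g ν W v e3).smul (-(Gt g ν W v e4))).add
      ((E_rep g ν W v e4).smul (Gt g ν W v e3))).add
      (((Gt_rep g ν W v).pad (show g+2 ≤ g+4 by omega)).smul (Efun g ν W v e4 e3))).congr'
      (G := fun x => -((1/2*((e3-x)*((e4-e3)*(e4-x)))) * W1c g W v x e3 e4 (g-1)))
      (fun x => by
        beta_reduce
        rw [st1 x e3 e4, Efun_antisym g ν W v hW e4 x]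
        ring)
    have hext2 : -(1/2*(e4-e3)) * csub e3 (csub e4 (W2c g W v e3 e4)) (g+1)
        = -(Gt g ν W v e4) * ecf g ν W v e3 (g+1)
          + Gt g ν W v e3 * ecf g ν W v e4 (g+1)
          + Efun g ν W v e4 e3 * gtc g ν W v (g+1) :=
      BKPC.extract hL hRL (g+1)
    have hv : ∀ m, g ≤ m → W2c g W v e3 e4 m = 0 := fun m hm => W2c_vanish g W v e3 e4 hm
    have c11 : csub e4 (W2c g W v e3 e4) (g+1) = 0 := by
      rw [csub_eval _ _ (by omega), show g+1-1 = g by omega, hv _ (by omega),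
        hv _ (by omega)]; ring
    have c12 : csub e4 (W2c g W v e3 e4) g = - W2c g W v e3 e4 (g-1) := by
      rw [csub_eval _ _ hg, hv _ le_rfl]; ring
    have c21 : csub e3 (csub e4 (W2c g W v e3 e4)) (g+1) = W2c g W v e3 e4 (g-1) := by
      rw [csub_eval _ _ (by omega), show g+1-1 = g by omega, c11, c12]; ring
    rw [c21, ecf_g1 g ν W v e3 hg hνm2, ecf_g1 g ν W v e4 hg hνm2, gtc_g1 g ν W v] at hext2
    linear_combination hext2
  -- Step 3 : extract the coefficient of `e3^g`
  have st3 : ∀ e4 : ℂ,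
      (1/2) * W3c g W v e4 (g-1)
        = (-(2*ν 4) - 3*pe2 g W 2 2 v) * Gt g ν W v e4
          - ν 2 * Hm g ν W v e4 + 2*ν 0 * Mm g ν W v e4 := by
    intro e4
    have hbase := W2_rep g W v hg e4
    have hL := ((hbase.mul_csub e4).smul (-(1/2))).pad (show g+1 ≤ g+4 by omega) |>.congr'
      (G := fun x => -((1/2*(e4-x)) * W2c g W v x e4 (g-1))) (fun x => by ring)
    have hRL := ((((Hm_rep g ν W v).pad (show g+3 ≤ g+4 by omega)).smul (Gt g ν W v e4)).add
      ((((Gt_rep g ν W v).pad (show g+2 ≤ g+4 by omega)).smul (-(Hm g ν W v e4))).add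
      ((E_rep g ν W v e4).smul (-(2*ν 0))))).congr'
      (G := fun x => -((1/2*(e4-x)) * W2c g W v x e4 (g-1)))
      (fun x => by
        beta_reduce
        rw [st2 x e4, Efun_antisym g ν W v hW e4 x]
        ring)
    have hext2 : -(1/2) * csub e4 (W3c g W v e4) g
        = Gt g ν W v e4 * hmc g ν W v g
          + (-(Hm g ν W v e4) * gtc g ν W v g + -(2*ν 0) * ecf g ν W v e4 g) :=
      BKPC.extract hL hRL g
    have c1 : csub e4 (W3c g W v e4) g = - W3c g W v e4 (g-1) := by
      rw [csub_eval _ _ hg, W3c_vanish g W v e4 le_rfl]; ring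
    rw [c1, hmc_g g ν W v hg, gtc_g g ν W v, ecf_g g ν W v e4 hg hνm2] at hext2
    linear_combination hext2
  -- Step 4 : extract the coefficient of `e4^(g-k)`
  have hbase := W3_rep g W v hg
  have hL := ((hbase.smul (1/2)).pad (show g ≤ g+4 by omega)).congr'
    (G := fun x => (1/2) * W3c g W v x (g-1)) (fun x => by ring)
  have hRL := ((((Gt_rep g ν W v).pad (show g+2 ≤ g+4 by omega)).smul
      (-(2*ν 4) - 3*pe2 g W 2 2 v)).add
    ((((Hm_rep g ν W v).pad (show g+3 ≤ g+4 by omega)).smul (-(ν 2))).add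
    (((Mm_rep g ν W v).pad (show g+3 ≤ g+4 by omega)).smul (2*ν 0)))).congr'
    (G := fun x => (1/2) * W3c g W v x (g-1))
    (fun x => by beta_reduce; rw [st3 x]; ring)
  have hext2 : (1/2) * W4c g W v (g-k)
      = (-(2*ν 4) - 3*pe2 g W 2 2 v) * gtc g ν W v (g-k)
        + (-(ν 2) * hmc g ν W v (g-k) + (2*ν 0) * mmc g ν W v (g-k)) :=
    BKPC.extract hL hRL (g-k)
  have hW4 : W4c g W v (g-k) = pe4 g W 2 2 2 (2*k) v := by
    unfold W4c
    rw [show 2*g - 2*(g-k) = 2*k by omega]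
  rw [hW4, gtc_gk g ν W v hk1 hkg, hmc_gk g ν W v hg hk1 hkg,
    mmc_gk g ν W v hg hk1 hkg] at hext2
  linear_combination 2 * hext2
end

section
/- Let g ≥ 1 be an integer, ν_0 ∈ ℂ∖{0}, a, a_1, …, a_{2g+1} ∈ ℂ with a ≠ a_i for all i, and N(x) = ν_0(x−a)∏_{i=1}^{2g+1}(x−a_i). Let s, t ∈ ℂ with s·t ≠ 0 and s^{2g+1}/t² = N'(a). Let λ̃_0, λ̃_2, …, λ̃_{4g+2} be the coefficients of M̃(X) = ∏_{i=1}^{2g+1}(X − s/(a_i−a)) = Σ_{i=0}^{2g+1} λ̃_{2i}X^{2g+1−i}, and set f̃(ẽ_1,ẽ_2) = Σ_{i=0}^{g} ẽ_1^i ẽ_2^i (2λ̃_{4g+2−4i} + λ̃_{4g−4i}(ẽ_1+ẽ_2)). Define, for e_1, e_2 ∈ ℂ∖{a}, f̄(e_1,e_2) = t^{−2}(e_1−a)^{g+1}(e_2−a)^{g+1}·f̃(s/(e_1−a), s/(e_2−a)). Then for every e ∈ ℂ∖{a}: f̄(e,e) = 2N(e) and (∂f̄/∂e_2)(e,e_2)|_{e_2=e}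 = N'(e). -/
private lemma sum_range_even_odd {M : Type*} [AddCommMonoid M] (f : ℕ → M) (n : ℕ) :
    ∑ k ∈ Finset.range (2*n), f k = ∑ i ∈ Finset.range n, (f (2*i) + f (2*i+1)) := by
  induction n with
  | zero => simp
  | succ n ih =>
    have h : 2 * (n+1) = (2*n + 1) + 1 := by ring
    rw [h, Finset.sum_range_succ, Finset.sum_range_succ, ih, Finset.sum_range_succ]
    abel

/-- with `f̄(e₁,e₂) = t⁻²(e₁-a)^{g+1}(e₂-a)^{g+1} f̃(s/(e₁-a), s/(e₂-a))`,
one has `f̄(e,e) = 2N(e)` and `(∂f̄/∂e₂)|_{e₂=e} = N'(e)` for all `e ≠ a`. -/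
theorem stmt_17 (g : ℕ) (hg : 1 ≤ g) (ν0 : ℂ) (hν0 : ν0 ≠ 0)
    (a : ℂ) (A : Fin (2*g+1) → ℂ) (hA : ∀ i, a ≠ A i)
    (N : ℂ → ℂ) (hN : N = fun x => ν0 * (x - a) * ∏ i, (x - A i))
    (s t : ℂ) (hst : s * t ≠ 0) (h : s^(2*g+1) / t^2 = deriv N a)
    (lam : ℕ → ℂ)
    (hlam : ∀ X : ℂ, ∏ i, (X - s/(A i - a)) = ∑ i ∈ Finset.range (2*g+2), lam (2*i) * X^(2*g+1-i))
    (ftil : ℂ → ℂ → ℂ)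
    (hftil : ftil = fun e1 e2 => ∑ i ∈ Finset.range (g+1),
      e1^i * e2^i * (2 * lam (4*g+2-4*i) + lam (4*g-4*i) * (e1+e2)))
    (fbar : ℂ → ℂ → ℂ)
    (hfbar : fbar = fun e1 e2 =>
      (t^2)⁻¹ * (e1-a)^(g+1) * (e2-a)^(g+1) * ftil (s/(e1-a)) (s/(e2-a))) :
    ∀ e : ℂ, e ≠ a →
      fbar e e = 2 * N e ∧ deriv (fun e2 => fbar e e2) e = deriv N e := by
  have hs : s ≠ 0 := fun hs0 => hst (by simp [hs0])
  have ht : t ≠ 0 := fun ht0 => hst (by simp [ht0])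
  have hAa : ∀ i, A i - a ≠ 0 := fun i => sub_ne_zero.mpr (hA i).symm
  have hPA : (∏ i, (A i - a)) ≠ 0 := Finset.prod_ne_zero_iff.mpr fun i _ => hAa i
  have hQdiff : ∀ x : ℂ, DifferentiableAt ℂ (fun y : ℂ => ∏ i, (y - A i)) x := fun x =>
    DifferentiableAt.fun_finsetProd (fun i _ => (differentiableAt_id.sub (differentiableAt_const _)))
  have hNdiff : ∀ x : ℂ, DifferentiableAt ℂ N x := by
    intro x; rw [hN]
    exact ((differentiableAt_const _).mul
      (differentiableAt_id.sub (differentiableAt_const _))).mul (hQdiff x)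
  -- deriv N a
  have hNa' : HasDerivAt N (ν0 * ∏ i, (a - A i)) a := by
    rw [hN]
    have h2 : HasDerivAt (fun y : ℂ => ∏ i, (y - A i))
        (deriv (fun y : ℂ => ∏ i, (y - A i)) a) a := (hQdiff a).hasDerivAt
    have h1 : HasDerivAt (fun y : ℂ => ν0 * (y - a)) ν0 a := by
      simpa using (HasDerivAt.const_mul ν0 ((hasDerivAt_id' a).sub_const a))
    simpa using h1.fun_mul h2
  have hNa : deriv N a = ν0 * ∏ i, (a - A i) := hNa'.deriv
  have hProdnegA : (∏ i, (a - A i)) = - ∏ i, (A i - a) := by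
    have h1 : ∀ i : Fin (2*g+1), a - A i = (-1) * (A i - a) := fun i => by ring
    rw [Finset.prod_congr rfl fun i _ => h1 i, Finset.prod_mul_distrib, Finset.prod_const,
      Finset.card_univ, Fintype.card_fin, Odd.neg_one_pow ⟨g, rfl⟩, neg_one_mul]
  have hS : s^(2*g+1) = -(t^2 * (ν0 * ∏ i, (A i - a))) := by
    rw [div_eq_iff (pow_ne_zero 2 ht)] at h
    rw [h, hNa, hProdnegA]; ring
  -- the key diagonal identity
  have key : ∀ x : ℂ, x ≠ a → fbar x x = 2 * N x := by
    intro x hx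
    have hxa : x - a ≠ 0 := sub_ne_zero.mpr hx
    have hA1 : ftil (s/(x-a)) (s/(x-a)) = 2 * ∏ i, (s/(x-a) - s/(A i - a)) := by
      rw [hftil, hlam (s/(x-a)), Finset.mul_sum,
        ← Finset.sum_range_reflect (fun j => 2 * (lam (2*j) * (s/(x-a))^(2*g+1-j))) (2*g+2)]
      have h2n : 2*g+2 = 2*(g+1) := by ring
      rw [h2n, sum_range_even_odd]
      apply Finset.sum_congr rfl
      intro i hi
      have hig : i ≤ g := Nat.lt_succ_iff.mp (Finset.mem_range.mp hi)
      have k1 : 2*(2*(g+1) - 1 - 2*i) = 4*g+2-4*i := by omega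
      have k2 : 2*g+1-(2*(g+1) - 1 - 2*i) = 2*i := by omega
      have k3 : 2*(2*(g+1) - 1 - (2*i+1)) = 4*g-4*i := by omega
      have k4 : 2*g+1-(2*(g+1) - 1 - (2*i+1)) = 2*i+1 := by omega
      rw [k1, k2, k3, k4]
      ring
    have hA2 : ∏ i, ((s/(x-a)) - s/(A i - a)) =
        (s^(2*g+1) * ∏ i, (A i - x)) / ((x-a)^(2*g+1) * ∏ i, (A i - a)) := by
      have h1 : ∀ i : Fin (2*g+1),
          (s/(x-a)) - s/(A i - a) = (s * (A i - x)) / ((x - a) * (A i - a)) := by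
        intro i
        field_simp [hxa, hAa i]
        ring
      rw [Finset.prod_congr rfl fun i _ => h1 i, Finset.prod_div_distrib,
        Finset.prod_mul_distrib, Finset.prod_mul_distrib, Finset.prod_const, Finset.prod_const,
        Finset.card_univ, Fintype.card_fin]
    have hProdneg : (∏ i, (A i - x)) = - ∏ i, (x - A i) := by
      have h1 : ∀ i : Fin (2*g+1), A i - x = (-1) * (x - A i) := fun i => by ring
      rw [Finset.prod_congr rfl fun i _ => h1 i, Finset.prod_mul_distrib, Finset.prod_const,
        Finset.card_univ, Fintype.card_fin, Odd.neg_one_pow ⟨g, rfl⟩, neg_one_mul]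
    rw [hfbar]
    simp only
    rw [hA1, hA2, hProdneg, hS, hN]
    simp only
    field_simp
    ring
  intro e he
  have hea : e - a ≠ 0 := sub_ne_zero.mpr he
  refine ⟨key e he, ?_⟩
  -- differentiability of the two-variable function
  have hd1 : DifferentiableAt ℂ (fun p : ℂ × ℂ => s * (p.1 - a)⁻¹) (e, e) := by
    apply (differentiableAt_const s).mul
    apply DifferentiableAt.inv (differentiableAt_fst.sub (differentiableAt_const a))
    simpa using hea
  have hd2 : DifferentiableAt ℂ (fun p : ℂ × ℂ => s * (p.2 - a)⁻¹) (e, e) := by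
    apply (differentiableAt_const s).mul
    apply DifferentiableAt.inv (differentiableAt_snd.sub (differentiableAt_const a))
    simpa using hea
  have hF : DifferentiableAt ℂ (fun p : ℂ × ℂ => fbar p.1 p.2) (e, e) := by
    simp only [hfbar, hftil, div_eq_mul_inv]
    apply DifferentiableAt.mul
    · exact ((differentiableAt_const _).mul
        ((differentiableAt_fst.sub (differentiableAt_const a)).pow _)).mul
        ((differentiableAt_snd.sub (differentiableAt_const a)).pow _)
    · apply DifferentiableAt.fun_sum
      intro i _
      exact ((hd1.pow i).mul (hd2.pow i)).mul
        ((differentiableAt_const _).add ((differentiableAt_const _).mul (hd1.add hd2)))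
  set F : ℂ × ℂ → ℂ := fun p => fbar p.1 p.2 with hF_def
  set L := fderiv ℂ F (e, e) with hL_def
  have hdiag0 := HasFDerivAt.comp_hasDerivAt_of_eq e hF.hasFDerivAt
      ((hasDerivAt_id' e).prodMk (hasDerivAt_id' e)) rfl
  have hdiag : HasDerivAt (fun x : ℂ => F (x, x)) (L (1, 1)) e := hdiag0
  have h20 := HasFDerivAt.comp_hasDerivAt_of_eq e hF.hasFDerivAt
      ((hasDerivAt_const e e).prodMk (hasDerivAt_id' e)) rfl
  have h2 : HasDerivAt (fun y : ℂ => F (e, y)) (L (0, 1)) e := h20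
  have h10 := HasFDerivAt.comp_hasDerivAt_of_eq e hF.hasFDerivAt
      ((hasDerivAt_id' e).prodMk (hasDerivAt_const e e)) rfl
  have h1 : HasDerivAt (fun x : ℂ => F (x, e)) (L (1, 0)) e := h10
  have hsym : ∀ x y : ℂ, fbar x y = fbar y x := by
    intro x y
    simp only [hfbar, hftil]
    rw [Finset.mul_sum, Finset.mul_sum]
    apply Finset.sum_congr rfl
    intro i _
    ring
  have h2' : HasDerivAt (fun x : ℂ => F (x, e)) (L (0, 1)) e := by
    have heq : (fun y : ℂ => F (e, y)) = fun x : ℂ => F (x, e) := funext fun x => hsym e x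
    rw [← heq]; exact h2
  have heq10 : L (1, 0) = L (0, 1) := h1.unique h2'
  have hdiag2 : HasDerivAt (fun x : ℂ => 2 * N x) (L (1, 1)) e := by
    apply hdiag.congr_of_eventuallyEq
    filter_upwards [eventually_ne_nhds he] with x hx
    exact (key x hx).symm
  have hderiv2N : HasDerivAt (fun x => 2 * N x) (2 * deriv N e) e :=
    HasDerivAt.const_mul 2 (hNdiff e).hasDerivAt
  have h11 : L (1, 1) = 2 * deriv N e := hdiag2.unique hderiv2N
  have hsplit : L (1, 1) = L (1, 0) + L (0, 1) := by
    have hv : ((1:ℂ), (1:ℂ)) = ((1:ℂ), (0:ℂ)) + ((0:ℂ), (1:ℂ)) := by simp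
    rw [hv, map_add]
  have hgoal : deriv (fun e2 => fbar e e2) e = L (0, 1) := by
    have heq : (fun e2 => fbar e e2) = fun y : ℂ => F (e, y) := rfl
    rw [heq]; exact h2.deriv
  rw [hgoal]
  rw [heq10] at hsplit
  rw [hsplit] at h11
  linear_combination h11 / 2
end

section
/- Let g ≥ 1 be an integer, ν_0 ∈ ℂ∖{0}, a, a_1, …, a_{2g+1} ∈ ℂ with a ≠ a_i for all i, N(x) = ν_0(x−a)∏_{i=1}^{2g+1}(x−a_i), and s, t ∈ ℂ with s·t ≠ 0 and s^{2g+1}/t² = N'(a). Set M̃(X) = ∏_{i=1}^{2g+1}(X − s/(a_i−a)). Let x_1, …, x_g ∈ ℂ be pairwise distinct with x_i ≠ a for all i, and set R(e) = (e−a)∏_{i=1}^g(e−x_i), X_i = s/(x_i−a), and R̃(X) = ∏_{i=1}^g(X−X_i). Then for all e_1, e_2 ∈ ℂ∖{a} with e_1 ≠ e_2 and e_1 ∉ {x_1,…,x_g}, writing ẽ_j = s/(e_j−a), one has (e_1−a)^{g−1}(e_2−a)^{g−1} · M̃(ẽ_1)R̃(ẽ_2)/((ẽ_1−ẽ_2)²R̃(ẽ_1))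 = s^{−2}t² · N(e_1)R(e_2)/((e_1−e_2)²R(e_1)). -/
set_option maxHeartbeats 2000000

/-- transformation rule for the third term of Baker's formula:
`(e₁-a)^{g-1}(e₂-a)^{g-1} · M̃(ẽ₁)R̃(ẽ₂)/((ẽ₁-ẽ₂)²R̃(ẽ₁))
 = s⁻²t² · N(e₁)R(e₂)/((e₁-e₂)²R(e₁))` where `ẽⱼ = s/(eⱼ-a)`. -/
theorem stmt_18 (g : ℕ) (hg : 1 ≤ g) (ν0 : ℂ) (hν0 : ν0 ≠ 0)
    (a : ℂ) (A : Fin (2*g+1) → ℂ) (hA : ∀ i, a ≠ A i)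
    (N : ℂ → ℂ) (hN : N = fun x => ν0 * (x - a) * ∏ i, (x - A i))
    (s t : ℂ) (hst : s * t ≠ 0) (h : s^(2*g+1) / t^2 = deriv N a)
    (M : ℂ → ℂ) (hM : M = fun X => ∏ i, (X - s/(A i - a)))
    (x : Fin g → ℂ) (hx : Function.Injective x) (hxa : ∀ i, x i ≠ a)
    (R : ℂ → ℂ) (hR : R = fun e => (e - a) * ∏ i, (e - x i))
    (Rtil : ℂ → ℂ) (hRtil : Rtil = fun X => ∏ i, (X - s/(x i - a))) :
    ∀ e1 e2 : ℂ, e1 ≠ a → e2 ≠ a → e1 ≠ e2 → (∀ i, e1 ≠ x i) →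
      (e1-a)^(g-1) * (e2-a)^(g-1) *
        (M (s/(e1-a)) * Rtil (s/(e2-a)) / ((s/(e1-a) - s/(e2-a))^2 * Rtil (s/(e1-a))))
      = (s^2)⁻¹ * t^2 * (N e1 * R e2 / ((e1-e2)^2 * R e1)) := by
  intro e1 e2 he1a he2a he12 he1x
  have hs : s ≠ 0 := fun hs => hst (by simp [hs])
  have ht : t ≠ 0 := fun ht => hst (by simp [ht])
  have hb1 : e1 - a ≠ 0 := sub_ne_zero.mpr he1a
  have hb2 : e2 - a ≠ 0 := sub_ne_zero.mpr he2a
  have hAa : ∀ i, A i - a ≠ 0 := fun i => sub_ne_zero.mpr (Ne.symm (hA i))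
  have hxa' : ∀ i, x i - a ≠ 0 := fun i => sub_ne_zero.mpr (hxa i)
  -- derivative
  have hP : DifferentiableAt ℂ (fun y : ℂ => ∏ i, (y - A i)) a :=
    DifferentiableAt.fun_finsetProd (fun i _ => (differentiableAt_id.sub_const (A i)))
  have h1 : HasDerivAt (fun y : ℂ => ν0 * (y - a)) ν0 a := by
    simpa using (((hasDerivAt_id a).sub_const a).const_mul ν0)
  have h3 : HasDerivAt (fun y : ℂ => ν0 * (y - a) * ∏ i, (y - A i))
      (ν0 * (∏ i, (a - A i)) + ν0 * (a - a) * deriv (fun y : ℂ => ∏ i, (y - A i)) a) a :=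
    h1.mul hP.hasDerivAt
  have hderiv : deriv N a = ν0 * ∏ i, (a - A i) := by
    rw [hN, h3.deriv]; simp
  -- product key lemma
  have key : ∀ (n : ℕ) (c : Fin n → ℂ) (e : ℂ), e - a ≠ 0 → (∀ i, c i - a ≠ 0) →
      ∏ i, (s/(e-a) - s/(c i - a))
        = s^n * (∏ i, (c i - e)) / ((e-a)^n * ∏ i, (c i - a)) := by
    intro n c e he hc
    have h1 : ∀ i ∈ Finset.univ, s/(e-a) - s/(c i - a)
        = s*(c i - e)/((e-a)*(c i - a)) := by
      intro i _
      rw [div_sub_div _ _ he (hc i)]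
      congr 1
      ring
    rw [Finset.prod_congr rfl h1, Finset.prod_div_distrib, Finset.prod_mul_distrib,
      Finset.prod_mul_distrib, Finset.prod_const, Finset.prod_const]
    simp [Finset.card_univ]
  -- sign lemmas
  have hueq : ∀ (n : ℕ) (f : Fin n → ℂ), ∏ i, (-(f i)) = (-1:ℂ)^n * ∏ i, f i := by
    intro n f
    calc ∏ i, (-(f i)) = ∏ i, ((-1) * f i) := by simp
    _ = (-1:ℂ)^n * ∏ i, f i := by
        rw [Finset.prod_mul_distrib, Finset.prod_const]; simp [Finset.card_univ]
  have hodd : ((-1:ℂ))^(2*g+1) = -1 := Odd.neg_one_pow ⟨g, by ring⟩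
  set u : ℂ := (-1:ℂ)^g with hu
  have hune : u ≠ 0 := pow_ne_zero _ (by norm_num)
  set PA := ∏ i, (A i - a) with hPAdef
  set Px := ∏ i, (x i - a) with hPxdef
  have hPA : PA ≠ 0 := Finset.prod_ne_zero_iff.mpr (fun i _ => hAa i)
  have hPx : Px ≠ 0 := Finset.prod_ne_zero_iff.mpr (fun i _ => hxa' i)
  set P1 := ∏ i, (A i - e1) with hP1
  set Q1 := ∏ i, (x i - e1) with hQ1
  set Q2 := ∏ i, (x i - e2) with hQ2
  have hQ1ne : Q1 ≠ 0 := Finset.prod_ne_zero_iff.mpr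
    (fun i _ => sub_ne_zero.mpr (Ne.symm (he1x i)))
  -- main rewrites
  have hMval : M (s/(e1-a)) = s^(2*g+1) * P1 / ((e1-a)^(2*g+1) * PA) := by
    rw [hM]; exact key _ A e1 hb1 hAa
  have hR1 : Rtil (s/(e1-a)) = s^g * Q1 / ((e1-a)^g * Px) := by
    rw [hRtil]; exact key _ x e1 hb1 hxa'
  have hR2 : Rtil (s/(e2-a)) = s^g * Q2 / ((e2-a)^g * Px) := by
    rw [hRtil]; exact key _ x e2 hb2 hxa'
  have hdiff : s/(e1-a) - s/(e2-a) = s*((e2-a)-(e1-a))/((e1-a)*(e2-a)) := by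
    field_simp
  have hNe1 : N e1 = -(ν0 * (e1-a) * P1) := by
    simp only [hN]
    have : ∏ i, (e1 - A i) = ∏ i, (-(A i - e1)) := by simp
    rw [this, hueq, hodd]
    ring
  have hRe1 : R e1 = (e1-a) * (u * Q1) := by
    simp only [hR]
    have : ∏ i, (e1 - x i) = ∏ i, (-(x i - e1)) := by simp
    rw [this, hueq]
  have hRe2 : R e2 = (e2-a) * (u * Q2) := by
    simp only [hR]
    have : ∏ i, (e2 - x i) = ∏ i, (-(x i - e2)) := by simp
    rw [this, hueq]
  have hs21 : s^(2*g+1) = -(t^2 * ν0 * PA) := by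
    have h2 : s^(2*g+1) = deriv N a * t^2 := by
      rw [← h]; field_simp
    rw [h2, hderiv]
    have : ∏ i, (a - A i) = ∏ i, (-(A i - a)) := by simp
    rw [this, hueq, hodd]
    ring
  have he12' : e1 - e2 = (e1-a) - (e2-a) := by ring
  rw [hMval, hR1, hR2, hdiff, hNe1, hRe1, hRe2, hs21, he12']
  obtain ⟨g', rfl⟩ : ∃ k, g = k + 1 := ⟨g - 1, (Nat.succ_pred_eq_of_pos hg).symm⟩
  simp only [Nat.add_sub_cancel]
  have hb12 : (e1 - a) - (e2 - a) ≠ 0 := by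
    rw [← he12']; exact sub_ne_zero.mpr he12
  set b1 := e1 - a with hbb1
  set b2 := e2 - a with hbb2
  clear_value u PA Px P1 Q1 Q2 b1 b2
  clear hN hM hR hRtil h hderiv h3 hP hdiff hMval hR1 hR2 hNe1 hRe1 hRe2 hs21
    hbb1 hbb2 he12' hu hPAdef hPxdef hP1 hQ1 hQ2 key hueq h1 hAa hxa' hA hxa he1x hx x A
  rw [show (b1 - b2)^2 = (b2 - b1)^2 by ring]
  have hD : b2 - b1 ≠ 0 := sub_ne_zero.mpr (Ne.symm (sub_ne_zero.mp hb12))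
  set D := b2 - b1 with hDdef
  clear hDdef hb12
  clear_value D
  field_simp [hb1, hb2, hs, hPx, hQ1ne, hune, hD, hPA]
  ring
end

section
/- Let g ≥ 1 be an integer, ν_0 ∈ ℂ∖{0}, a, a_1, …, a_{2g+1} ∈ ℂ with a ≠ a_i for all i, N(x) = ν_0(x−a)∏_{i=1}^{2g+1}(x−a_i), and s, t ∈ ℂ with s·t ≠ 0 and s^{2g+1}/t² = N'(a). Let (x_1,y_1), …, (x_g,y_g) ∈ ℂ² satisfy y_i² = N(x_i), with the x_i pairwise distinct and x_i ≠ a for all i. Set R(e) = (e−a)∏_{i=1}^g(e−x_i), X_i = s/(x_i−a), Y_i = t·y_i/(x_i−a)^{g+1}, R̃(X) = ∏_{i=1}^g(X−X_i), ∇(e_1,e_2) = Σ_{i=1}^g y_i/((e_1−x_i)(e_2−x_i)R'(x_i)), and ∇̃(ẽ_1,ẽ_2) = Σ_{i=1}^g Y_i/((ẽ_1−X_i)(ẽ_2−X_i)R̃'(X_i)). Then for all e_1, e_2 ∈ ℂ∖({a} ∪ {x_1,…,x_g}), writing ẽ_j = s/(e_j−a), one has (e_1−a)^{g−1}(e_2−a)^{g−1}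 · R̃(ẽ_1)R̃(ẽ_2)·∇̃(ẽ_1,ẽ_2)² = s^{−2}t² · R(e_1)R(e_2)·∇(e_1,e_2)². -/
open Finset

private lemma diffprod {n : ℕ} (w : Fin n → ℂ) (S : Finset (Fin n)) :
    Differentiable ℂ (fun e : ℂ => ∏ j ∈ S, (e - w j)) := by
  apply Differentiable.fun_finsetProd
  intro j _
  exact differentiable_id.sub_const _

private lemma deriv_prod_lin {n : ℕ} (w : Fin n → ℂ) (c : ℂ) (i : Fin n) :
    deriv (fun e : ℂ => (e - c) * ∏ j, (e - w j)) (w i)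
      = (w i - c) * ∏ j ∈ Finset.univ.erase i, (w i - w j) := by
  have hre : (fun e : ℂ => (e - c) * ∏ j, (e - w j))
      = fun e => (e - w i) * ((e - c) * ∏ j ∈ Finset.univ.erase i, (e - w j)) := by
    funext e
    rw [← Finset.mul_prod_erase _ _ (Finset.mem_univ i)]
    ring
  have h1 : HasDerivAt (fun e : ℂ => e - w i) 1 (w i) := (hasDerivAt_id _).sub_const _
  have h2 := (((differentiable_id.sub_const c).fun_mul (diffprod w (Finset.univ.erase i)))
    (w i)).hasDerivAt
  have := (h1.fun_mul h2).deriv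
  simp only [id_eq] at this
  rw [hre, this]
  simp

private lemma deriv_prod_lin' {n : ℕ} (w : Fin n → ℂ) (i : Fin n) :
    deriv (fun e : ℂ => ∏ j, (e - w j)) (w i)
      = ∏ j ∈ Finset.univ.erase i, (w i - w j) := by
  have hre : (fun e : ℂ => ∏ j, (e - w j))
      = fun e => (e - w i) * ∏ j ∈ Finset.univ.erase i, (e - w j) := by
    funext e
    rw [← Finset.mul_prod_erase _ _ (Finset.mem_univ i)]
  have h1 : HasDerivAt (fun e : ℂ => e - w i) 1 (w i) := (hasDerivAt_id _).sub_const _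
  have h2 := ((diffprod w (Finset.univ.erase i)) (w i)).hasDerivAt
  have := (h1.fun_mul h2).deriv
  rw [hre, this]
  simp
open Finset

set_option maxHeartbeats 2000000 in


/-- transformation rule for the `∇²`-term of Baker's formula:
`(e₁-a)^{g-1}(e₂-a)^{g-1} · R̃(ẽ₁)R̃(ẽ₂)∇̃(ẽ₁,ẽ₂)² = s⁻²t² · R(e₁)R(e₂)∇(e₁,e₂)²`
where `ẽⱼ = s/(eⱼ-a)`. -/
theorem stmt_19 (g : ℕ) (hg : 1 ≤ g) (ν0 : ℂ) (hν0 : ν0 ≠ 0)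
    (a : ℂ) (A : Fin (2*g+1) → ℂ) (hA : ∀ i, a ≠ A i)
    (N : ℂ → ℂ) (hN : N = fun x => ν0 * (x - a) * ∏ i, (x - A i))
    (s t : ℂ) (hst : s * t ≠ 0) (h : s^(2*g+1) / t^2 = deriv N a)
    (x y : Fin g → ℂ) (hxy : ∀ i, (y i)^2 = N (x i))
    (hx : Function.Injective x) (hxa : ∀ i, x i ≠ a)
    (R : ℂ → ℂ) (hR : R = fun e => (e - a) * ∏ i, (e - x i))
    (X : Fin g → ℂ) (hX : X = fun i => s / (x i - a))
    (Y : Fin g → ℂ) (hY : Y = fun i => t * y i / (x i - a)^(g+1))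
    (Rtil : ℂ → ℂ) (hRtil : Rtil = fun e => ∏ i, (e - X i))
    (nab : ℂ → ℂ → ℂ)
    (hnab : nab = fun e1 e2 => ∑ i, y i / ((e1 - x i) * (e2 - x i) * deriv R (x i)))
    (nabtil : ℂ → ℂ → ℂ)
    (hnabtil : nabtil = fun f1 f2 => ∑ i, Y i / ((f1 - X i) * (f2 - X i) * deriv Rtil (X i))) :
    ∀ e1 e2 : ℂ, e1 ≠ a → e2 ≠ a → (∀ i, e1 ≠ x i) → (∀ i, e2 ≠ x i) →
      (e1-a)^(g-1) * (e2-a)^(g-1) *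
        (Rtil (s/(e1-a)) * Rtil (s/(e2-a)) * (nabtil (s/(e1-a)) (s/(e2-a)))^2)
      = (s^2)⁻¹ * t^2 * (R e1 * R e2 * (nab e1 e2)^2) := by
  obtain ⟨m, rfl⟩ : ∃ m, g = m + 1 := ⟨g - 1, (Nat.succ_pred_eq_of_pos hg).symm⟩
  have hs : s ≠ 0 := left_ne_zero_of_mul hst
  obtain ⟨w, hw⟩ : ∃ w : ℂ, w = -s := ⟨-s, rfl⟩
  have hwne : w ≠ 0 := by rw [hw]; exact neg_ne_zero.2 hs
  intro e1 e2 he1 he2 he1x he2x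
  have hxa' : ∀ j, x j - a ≠ 0 := fun j => sub_ne_zero.2 (hxa j)
  have he1a : e1 - a ≠ 0 := sub_ne_zero.2 he1
  have he2a : e2 - a ≠ 0 := sub_ne_zero.2 he2
  have he1x' : ∀ j, e1 - x j ≠ 0 := fun j => sub_ne_zero.2 (he1x j)
  have he2x' : ∀ j, e2 - x j ≠ 0 := fun j => sub_ne_zero.2 (he2x j)
  have hPne : (∏ j, (x j - a)) ≠ 0 := Finset.prod_ne_zero_iff.2 fun j _ => hxa' j
  -- derivative computations
  have hderR : ∀ i, deriv R (x i) = (x i - a) * ∏ j ∈ Finset.univ.erase i, (x i - x j) := by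
    intro i; rw [hR]; exact deriv_prod_lin x a i
  have hderRt : ∀ i, deriv Rtil (X i) = ∏ j ∈ Finset.univ.erase i, (X i - X j) := by
    intro i; rw [hRtil]; exact deriv_prod_lin' X i
  -- basic difference formula
  have hdiff : ∀ e : ℂ, e - a ≠ 0 → ∀ j, s / (e - a) - X j
      = w * (e - x j) * ((e - a) * (x j - a))⁻¹ := by
    intro e he j
    rw [hX, hw]
    field_simp [he, hxa' j]
    ring
  -- erase-product formula
  have hcard : ∀ i : Fin (m+1), (Finset.univ.erase i).card = m := by
    intro i
    rw [Finset.card_erase_of_mem (Finset.mem_univ i), Finset.card_univ, Fintype.card_fin,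
      Nat.add_sub_cancel]
  have hDt : ∀ i : Fin (m+1), (∏ j ∈ Finset.univ.erase i, (X i - X j))
      = w^m * (∏ j ∈ Finset.univ.erase i, (x i - x j))
        * ((x i - a)^m * ∏ j ∈ Finset.univ.erase i, (x j - a))⁻¹ := by
    intro i
    have h1 : ∀ j ∈ Finset.univ.erase i, X i - X j
        = w * (x i - x j) * ((x i - a) * (x j - a))⁻¹ := by
      intro j _
      rw [show X i = s / (x i - a) by rw [hX]]
      exact hdiff (x i) (hxa' i) j
    rw [Finset.prod_congr rfl h1, Finset.prod_mul_distrib, Finset.prod_mul_distrib,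
      Finset.prod_const, Finset.prod_inv_distrib, Finset.prod_mul_distrib,
      Finset.prod_const, hcard i]
  -- Rtil formula
  have hRt : ∀ e : ℂ, e - a ≠ 0 → Rtil (s/(e-a))
      = w^(m+1) * (∏ j, (e - x j)) * ((e - a)^(m+1) * ∏ j, (x j - a))⁻¹ := by
    intro e he
    rw [hRtil]
    simp only
    rw [Finset.prod_congr rfl fun j _ => hdiff e he j, Finset.prod_mul_distrib,
      Finset.prod_mul_distrib, Finset.prod_const, Finset.prod_inv_distrib,
      Finset.prod_mul_distrib, Finset.prod_const, Finset.card_univ, Fintype.card_fin]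
  -- key: nabtil = c * nab
  have key : nabtil (s/(e1-a)) (s/(e2-a))
      = (t * (e1-a) * (e2-a) * (∏ j, (x j - a)) * (w^(m+2))⁻¹) * nab e1 e2 := by
    rw [hnab, hnabtil]
    simp only
    rw [Finset.mul_sum]
    refine Finset.sum_congr rfl fun i _ => ?_
    have hDine : (∏ j ∈ Finset.univ.erase i, (x i - x j)) ≠ 0 :=
      Finset.prod_ne_zero_iff.2 fun j hj =>
        sub_ne_zero.2 fun hc => (Finset.mem_erase.1 hj).1 (hx hc.symm)
    have hPine : (∏ j ∈ Finset.univ.erase i, (x j - a)) ≠ 0 :=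
      Finset.prod_ne_zero_iff.2 fun j _ => hxa' j
    have hdenom : w * (e1 - x i) * ((e1 - a) * (x i - a))⁻¹
          * (w * (e2 - x i) * ((e2 - a) * (x i - a))⁻¹)
          * (w ^ m * (∏ j ∈ Finset.univ.erase i, (x i - x j))
              * ((x i - a) ^ m * ∏ j ∈ Finset.univ.erase i, (x j - a))⁻¹)
        = (w^(m+2) * (e1 - x i) * (e2 - x i) * ∏ j ∈ Finset.univ.erase i, (x i - x j))
          / ((e1 - a) * (e2 - a) * (x i - a)^(m+2) * ∏ j ∈ Finset.univ.erase i, (x j - a)) := by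
      field_simp [hwne, he1a, he2a, hxa' i, hPine]
      ring
    rw [hdiff e1 he1a i, hdiff e2 he2a i, hderR i, hderRt i, hDt i, hY,
      ← Finset.mul_prod_erase _ (fun j => x j - a) (Finset.mem_univ i), hdenom]
    simp only
    rw [div_div_div_eq]
    set Di := ∏ j ∈ Finset.univ.erase i, (x i - x j) with hDi
    set Pi := ∏ j ∈ Finset.univ.erase i, (x j - a) with hPi
    rw [← mul_div_assoc]
    rw [div_eq_div_iff
      (mul_ne_zero (pow_ne_zero _ (hxa' i)) (mul_ne_zero (mul_ne_zero
        (mul_ne_zero (pow_ne_zero _ hwne) (he1x' i)) (he2x' i)) hDine))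
      (mul_ne_zero (mul_ne_zero (he1x' i) (he2x' i)) (mul_ne_zero (hxa' i) hDine))]
    field_simp [hwne]
  rw [key, hRt e1 he1a, hRt e2 he2a, hR]
  simp only [Nat.add_sub_cancel]
  have hs2 : ((s:ℂ)^2)⁻¹ = (w^2)⁻¹ := by rw [hw]; ring_nf
  rw [hs2]
  set P := ∏ j, (x j - a) with hP
  set Q1 := ∏ j, (e1 - x j) with hQ1
  set Q2 := ∏ j, (e2 - x j) with hQ2
  field_simp [hwne, he1a, he2a, hPne]
  ring
end
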